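/- arXiv:1410.5067 — 10 statements merged into one kernel-verified Lean document; each statement's English description precedes it below -/
import Mathlib

section
/- Let L/K be a quadratic field extension, E an étale L-algebra of rank n with a K-linear involution σ restricting to the nontrivial automorphism of L/K, and F = E^σ with dim_K F = n. For a ∈ F^×, the determinant of the hermitian form T_a(x,y) = Tr_{E/L}(a x σ(y)) satisfies det(T_a) = N_{F/K}(a) · det(T_1) in K^×/N_{L/K}(L^×). -/
/-!
Writing `a * b i` in the basis `b` shows that the Gram matrix of `T_a` is `Mᵀ * G₁`, where `M`
is the matrix of multiplication by `a` and `G₁` the Gram matrix of `T_1`; hence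
`det T_a = N_{E/L}(a) · det T_1`, and one may take `l = 1`. Since `σ` acts on `L` nontrivially,
`E` is spanned over `L` by the fixed algebra `F`, so by the dimension hypothesis a `K`-basis of
`F` is an `L`-basis of `E`. In such a basis multiplication by `a ∈ F` has the same matrix over
`F` and over `E`, so `N_{E/L}(a) = N_{F/K}(a)`.
-/

/-- The `K`-subalgebra of fixed points of a `K`-linear algebra involution. -/
def fixedSubalgebra {K E : Type*} [CommSemiring K] [Semiring E] [Algebra K E]
    (σ : E →ₐ[K] E) : Subalgebra K E where
  carrier := {x | σ x = x}
  mul_mem' hx hy := by simp_all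
  add_mem' hx hy := by simp_all
  one_mem' := by simp
  zero_mem' := by simp
  algebraMap_mem' r := by simp

universe u

open Matrix Module

theorem Algebra.det_trace_mul_left_gram {L E ι : Type*} [CommRing L] [CommRing E] [Algebra L E]
    [Fintype ι] [DecidableEq ι] (b : Basis ι L E) (a : E) (τ : E → E) :
    (of fun i j => trace L E (a * b i * τ (b j))).det
      = norm L a * (of fun i j => trace L E (b i * τ (b j))).det := by
  have gram : (of fun i j => trace L E (a * b i * τ (b j)))
      = (leftMulMatrix b a)ᵀ * of fun i j => trace L E (b i * τ (b j)) := by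
    ext i j
    calc trace L E (a * b i * τ (b j))
        = trace L E ((∑ k, b.repr (a * b i) k • b k) * τ (b j)) := by rw [b.sum_repr]
      _ = _ := by
        simp only [Finset.sum_mul, smul_mul_assoc, map_sum, map_smul, smul_eq_mul, mul_apply,
          transpose_apply, leftMulMatrix_eq_repr_mul, of_apply]
  rw [gram, det_mul, det_transpose, norm_eq_matrix_det b]

theorem span_fixedSubalgebra_eq_top {K L E : Type*} [CommSemiring K] [Field L] [Ring E]
    [Algebra K L] [Algebra L E] [Algebra K E] [IsScalarTower K L E]
    {σ : E →ₐ[K] E} (hσ : ∀ x, σ (σ x) = x) {s : L → L}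
    (hσL : ∀ l, σ (algebraMap L E l) = algebraMap L E (s l)) (hs : ∃ l, s l ≠ l) :
    Submodule.span L (fixedSubalgebra σ : Set E) = ⊤ := by
  obtain ⟨l, hl⟩ := hs
  have hsmul (c : L) (y : E) : σ (c • y) = s c • σ y := by
    rw [Algebra.smul_def, map_mul, hσL, Algebra.smul_def]
  have trace_fixed (y : E) : y + σ y ∈ fixedSubalgebra σ := by
    change σ (y + σ y) = y + σ y
    rw [map_add, hσ, add_comm]
  rw [Submodule.eq_top_iff']
  intro x
  have hne : l - s l ≠ 0 := sub_ne_zero.mpr hl.symm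
  have key : (l - s l) • x = (l • x + σ (l • x)) - s l • (x + σ x) := by
    rw [hsmul, smul_add, sub_smul]
    abel
  rw [← inv_smul_smul₀ hne x, key]
  exact Submodule.smul_mem _ _ <| Submodule.sub_mem _ (Submodule.subset_span (trace_fixed _))
    (Submodule.smul_mem _ _ (Submodule.subset_span (trace_fixed _)))

section BasisOfSpan

variable {K L E : Type*} [Field K] [Field L] [Ring E]
    [Algebra K L] [Algebra L E] [Algebra K E] [IsScalarTower K L E] {F : Subalgebra K E}

theorem Module.Basis.repr_coe_of_coe_eq {ι : Type*} [Fintype ι] {b : Basis ι L E}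
    {f : Basis ι K F} (hbf : ∀ i, b i = f i) (x : F) (i : ι) :
    b.repr x i = algebraMap K L (f.repr x i) := by
  have hx : (x : E) = ∑ k, algebraMap K L (f.repr x k) • b k := by
    conv_lhs => rw [← f.sum_repr x]
    simp only [AddSubmonoidClass.coe_finsetSum, SetLike.val_smul, hbf, algebraMap_smul]
  rw [hx, b.repr_sum_self]

theorem Subalgebra.span_range_coe_basis_eq_top {ι : Type*} (f : Basis ι K F)
    (hspan : Submodule.span L (F : Set E) = ⊤) :
    Submodule.span L (Set.range fun i => (f i : E)) = ⊤ := by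
  have hK : Submodule.span K (Set.range fun i => (f i : E)) = Subalgebra.toSubmodule F := by
    rw [show (Set.range fun i => (f i : E)) = (Subalgebra.toSubmodule F).subtype '' Set.range f
        from Set.range_comp _ _, Submodule.span_image, f.span_eq,
      Submodule.map_top, Submodule.range_subtype]
  rw [← Submodule.span_span_of_tower K, hK, Subalgebra.coe_toSubmodule, hspan]

theorem Subalgebra.norm_coe_eq_of_span_eq_top [FiniteDimensional K F]
    (hspan : Submodule.span L (F : Set E) = ⊤) (hrank : finrank K F = finrank L E) (x : F) :
    Algebra.norm L (x : E) = algebraMap K L (Algebra.norm K x) := by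
  let f := finBasis K F
  let b : Basis (Fin (finrank K F)) L E := basisOfTopLeSpanOfCardEqFinrank (fun i => (f i : E))
    (span_range_coe_basis_eq_top f hspan).ge (by simp [hrank])
  have hbf (i) : b i = f i := by simp [b]
  have hmat :
      Algebra.leftMulMatrix b (x : E) = (Algebra.leftMulMatrix f x).map (algebraMap K L) := by
    ext i j
    rw [map_apply, Algebra.leftMulMatrix_eq_repr_mul, Algebra.leftMulMatrix_eq_repr_mul, hbf,
      ← Subalgebra.coe_mul, b.repr_coe_of_coe_eq hbf]
  rw [Algebra.norm_eq_matrix_det b, Algebra.norm_eq_matrix_det f, hmat, RingHom.map_det]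
  rfl

end BasisOfSpan

theorem det_hermitian_scaled_trace_form_general
    (K L : Type u) [Field K] [Field L] [Algebra K L]
    (s : L ≃ₐ[K] L) (hs : s ≠ AlgEquiv.refl)
    (E : Type u) [CommRing E] [Algebra L E] [Algebra K E] [IsScalarTower K L E]
    [Module.Finite K E]
    (n : ℕ) (hrank : Module.finrank L E = n)
    (σ : E →ₐ[K] E) (hσ : ∀ x, σ (σ x) = x)
    (hσL : ∀ l : L, σ (algebraMap L E l) = algebraMap L E (s l))
    (hF : Module.finrank K (fixedSubalgebra σ) = n)
    (a : E) (haσ : σ a = a)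
    (ι : Type u) [Fintype ι] [DecidableEq ι] (b : Module.Basis ι L E) :
    ∃ l : L, l ≠ 0 ∧
      (Matrix.of fun i j => Algebra.trace L E (a * b i * σ (b j))).det
        = algebraMap K L
            (Algebra.norm K (⟨a, haσ⟩ : fixedSubalgebra σ) * Algebra.norm K l) *
          (Matrix.of fun i j => Algebra.trace L E (b i * σ (b j))).det := by
  have hspan := span_fixedSubalgebra_eq_top hσ hσL (DFunLike.ne_iff.mp hs)
  refine ⟨1, one_ne_zero, ?_⟩
  rw [map_one, mul_one, Algebra.det_trace_mul_left_gram,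
    ← (fixedSubalgebra σ).norm_coe_eq_of_span_eq_top hspan (hF.trans hrank.symm) ⟨a, haσ⟩]

/-- Let `L/K` be a quadratic field extension, `E` an étale `L`-algebra of
rank `n` with a `K`-linear involution `σ` restricting to the nontrivial automorphism `s` of
`L/K`, and `F = E^σ` with `dim_K F = n`.  For `a ∈ F^×`, the determinant of the hermitian form
`T_a(x,y) = Tr_{E/L}(a x σ(y))` satisfies `det(T_a) = N_{F/K}(a) · det(T_1)` in
`K^×/N_{L/K}(L^×)` (determinants taken with respect to an `L`-basis `b` of `E`). -/
theorem det_hermitian_scaled_trace_form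
    (K L : Type u) [Field K] [Field L] [Algebra K L]
    (hKL : Module.finrank K L = 2)
    (s : L ≃ₐ[K] L) (hs : s ≠ AlgEquiv.refl)
    (E : Type u) [CommRing E] [Algebra L E] [Algebra K E] [IsScalarTower K L E]
    [Module.Finite L E] [Algebra.Etale L E] [Module.Finite K E]
    (n : ℕ) (hrank : Module.finrank L E = n)
    (σ : E →ₐ[K] E) (hσ : ∀ x, σ (σ x) = x)
    (hσL : ∀ l : L, σ (algebraMap L E l) = algebraMap L E (s l))
    (hF : Module.finrank K (fixedSubalgebra σ) = n)
    (a : E) (ha : IsUnit a) (haσ : σ a = a)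
    (ι : Type u) [Fintype ι] [DecidableEq ι] (b : Module.Basis ι L E) :
    ∃ l : L, l ≠ 0 ∧
      (Matrix.of fun i j => Algebra.trace L E (a * b i * σ (b j))).det
        = algebraMap K L
            (Algebra.norm K (⟨a, haσ⟩ : fixedSubalgebra σ) * Algebra.norm K l) *
          (Matrix.of fun i j => Algebra.trace L E (b i * σ (b j))).det :=
  det_hermitian_scaled_trace_form_general K L s hs E n hrank σ hσ hσL hF a haσ ι b
end

section
/- Let A be a central simple L-algebra, E a maximal commutative étale subalgebra of A (via an embedding ε : E → A), θ an involution of A such that ε : (E,σ) → (A,θ) respects involutions, and for a in the fixed algebra F = E^σ let θ_a = θ ∘ Int(ε(a)). If α ∈ A^× satisfies: Int(α) : (A,θ_a) → (A,θ_b) is an isomorphism of algebras with involution and Int(α) ∘ ε = ε, then α = ε(y) for some y ∈ E^× and there exists λ ∈ L^× with N_{E/F}(y) = λ a b^{−1}. -/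
/-!
Since `Int(α)` fixes `ε(E)` pointwise and `ε(E)` is its own centralizer, `α = ε y` with
`y ∈ E^×`. Unwinding the compatibility of `Int(ε y)` with the involutions `θ_a` and `θ_b`
shows that conjugation by `ε(y a⁻¹)` and by `ε(b⁻¹ σ(y)⁻¹)` agree on `A`, so
`ε(σ(y) b y a⁻¹)` is central, hence a scalar `λ ∈ L^×`; that is `y σ(y) b = λ a`.
-/

theorem map_eq_self_of_mul_eq_one {M F : Type*} [CommMonoid M] [FunLike F M M]
    [MonoidHomClass F M M] (f : F) {a b : M} (hfa : f a = a) (hab : a * b = 1) : f b = b :=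
  (left_inv_eq_right_inv (by rwa [mul_comm] at hab)
    (by rw [← hfa, ← map_mul, hab, map_one])).symm

theorem commute_mul_of_forall_conj_eq {M : Type*} [Monoid M] {u u' v v' : M}
    (hu : u' * u = 1) (hv : v' * v = 1) (h : ∀ z, u * z * u' = v * z * v') (z : M) :
    Commute (v' * u) z :=
  calc v' * u * z = v' * (u * z * u') * u := by simp only [mul_assoc, hu, mul_one]
    _ = z * (v' * u) := by simp only [h, ← mul_assoc, hv, one_mul]

theorem exists_algebraMap_eq_of_forall_commute {L A E : Type*} [CommSemiring L] [Semiring A]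
    [Algebra L A] [Algebra.IsCentral L A] [Semiring E] [Algebra L E] {ε : E →ₐ[L] A}
    (hinj : Function.Injective ε) {c : E} (hc : ∀ z, Commute (ε c) z) :
    ∃ lam : L, algebraMap L E lam = c := by
  have hcenter : ε c ∈ Subalgebra.center L A :=
    Subalgebra.mem_center_iff.mpr fun z => (hc z).symm
  obtain ⟨lam, hlam⟩ := Algebra.mem_bot.mp (Algebra.IsCentral.out hcenter)
  exact ⟨lam, hinj (by rw [AlgHom.commutes, hlam])⟩

theorem conj_eq_of_isom_of_involution {L A E : Type*} [CommSemiring L] [Ring A] [Algebra L A]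
    [CommRing E] [Algebra L E] (σ : E →ₐ[L] E) (ε : E →ₐ[L] A) (θ : A → A)
    (hθmul : ∀ x y, θ (x * y) = θ y * θ x) (hθinv : ∀ x, θ (θ x) = x)
    (hθcompat : ∀ e : E, θ (ε e) = ε (σ e))
    {a b ai bi y y' : E} (haσ : σ a = a) (hbσ : σ b = b) (hai : a * ai = 1) (hbi : b * bi = 1)
    (hiso : ∀ x : A,
      ε y * θ (ε a * x * ε ai) * ε y' = θ (ε b * (ε y * x * ε y') * ε bi))
    (z : A) : ε (y * ai) * z * ε (a * y') = ε (bi * σ y') * z * ε (σ y * b) := by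
  have h := hiso (θ z)
  simp only [hθmul, hθinv, hθcompat, haσ, hbσ, map_eq_self_of_mul_eq_one σ haσ hai,
    map_eq_self_of_mul_eq_one σ hbσ hbi] at h
  simpa only [map_mul, mul_assoc] using h

theorem unit_of_int_isom_commuting_with_embedding_general
    (L : Type u) [Field L]
    (A : Type u) [Ring A] [Algebra L A] [Algebra.IsCentral L A] [IsSimpleRing A]
    (E : Type u) [CommRing E] [Algebra L E]
    (σ : E →ₐ[L] E)
    (ε : E →ₐ[L] A) (hinj : Function.Injective ε)
    (hmaxcomm : ∀ x : A, (∀ e : E, x * ε e = ε e * x) → ∃ e : E, x = ε e)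
    (θ : A → A)
    (hθmul : ∀ x y, θ (x * y) = θ y * θ x) (hθinv : ∀ x, θ (θ x) = x)
    (hθcompat : ∀ e : E, θ (ε e) = ε (σ e))
    (a b : E) (haσ : σ a = a) (hbσ : σ b = b)
    (ai bi : E) (hai : a * ai = 1) (hbi : b * bi = 1)
    (α αi : A) (hαi : α * αi = 1) (hαi' : αi * α = 1)
    -- `Int(α) : (A, θ_a) → (A, θ_b)` is an isomorphism of algebras with involution:
    (hiso : ∀ x : A, α * θ (ε a * x * ε ai) * αi = θ (ε b * (α * x * αi) * ε bi))
    -- `Int(α) ∘ ε = ε`: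
    (hcomm : ∀ e : E, α * ε e = ε e * α) :
    ∃ y : E, IsUnit y ∧ α = ε y ∧
      ∃ lam : L, lam ≠ 0 ∧ y * σ y * b = lam • a := by
  have hcomm' (e : E) : αi * ε e = ε e * αi :=
    Commute.units_inv_left (u := ⟨α, αi, hαi, hαi'⟩) (hcomm e)
  obtain ⟨y, rfl⟩ := hmaxcomm α hcomm
  obtain ⟨y', rfl⟩ := hmaxcomm αi hcomm'
  have hyy' : y * y' = 1 := hinj (by rwa [map_mul, map_one])
  have hσyy' : σ y * σ y' = 1 := by rw [← map_mul, hyy', map_one]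
  have hcentral := commute_mul_of_forall_conj_eq
    (by rw [← map_mul, ← map_one ε]; congr 1; linear_combination y * y' * hai + hyy')
    (by rw [← map_mul, ← map_one ε]; congr 1; linear_combination σ y * σ y' * hbi + hσyy')
    (conj_eq_of_isom_of_involution σ ε θ hθmul hθinv hθcompat haσ hbσ hai hbi hiso)
  rw [← map_mul] at hcentral
  obtain ⟨lam, hlam⟩ := exists_algebraMap_eq_of_forall_commute hinj hcentral
  have hnorm : y * σ y * b = lam • a := by
    rw [Algebra.smul_def, hlam]; linear_combination (-(σ y * b * y)) * hai
  refine ⟨y, .of_mul_eq_one y' hyy', rfl, lam, ?_, hnorm⟩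
  rintro rfl
  have := ε.toRingHom.domain_nontrivial
  apply one_ne_zero (α := E)
  rw [zero_smul] at hnorm
  linear_combination
    (y' * σ y' * bi) * hnorm - σ y * σ y' * b * bi * hyy' - b * bi * hσyy' - hbi

/-- Let `A` be a central simple `L`-algebra, `ε : E → A` an embedding of a
commutative étale `L`-algebra whose image is a maximal commutative subalgebra (i.e. equal to
its own centralizer), `θ` an involution of `A` such that `ε : (E,σ) → (A,θ)` respects the
involutions, and for `σ`-fixed units `a, b` of `E` let `θ_a = θ ∘ Int(ε(a))`,
`θ_b = θ ∘ Int(ε(b))`.  If `α ∈ A^×` is such that `Int(α) : (A,θ_a) → (A,θ_b)` is an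
isomorphism of algebras with involution and `Int(α) ∘ ε = ε`, then `α = ε(y)` for some
`y ∈ E^×` and there exists `λ ∈ L^×` with `N_{E/F}(y) = λ a b⁻¹`
(equivalently `y·σ(y)·b = λ·a`). -/
theorem unit_of_int_isom_commuting_with_embedding
    (L : Type u) [Field L]
    (A : Type u) [Ring A] [Algebra L A] [Algebra.IsCentral L A] [IsSimpleRing A]
    [FiniteDimensional L A]
    (E : Type u) [CommRing E] [Algebra L E] [Module.Finite L E] [Algebra.Etale L E]
    (σ : E →ₐ[L] E) (hσ : ∀ x, σ (σ x) = x)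
    (ε : E →ₐ[L] A) (hinj : Function.Injective ε)
    (hmaxcomm : ∀ x : A, (∀ e : E, x * ε e = ε e * x) → ∃ e : E, x = ε e)
    (θ : A → A) (hθadd : ∀ x y, θ (x + y) = θ x + θ y)
    (hθmul : ∀ x y, θ (x * y) = θ y * θ x) (hθinv : ∀ x, θ (θ x) = x)
    (hθcompat : ∀ e : E, θ (ε e) = ε (σ e))
    (a b : E) (haσ : σ a = a) (hbσ : σ b = b)
    (ai bi : E) (hai : a * ai = 1) (hbi : b * bi = 1)
    (α αi : A) (hαi : α * αi = 1) (hαi' : αi * α = 1)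
    -- `Int(α) : (A, θ_a) → (A, θ_b)` is an isomorphism of algebras with involution:
    (hiso : ∀ x : A, α * θ (ε a * x * ε ai) * αi = θ (ε b * (α * x * αi) * ε bi))
    -- `Int(α) ∘ ε = ε`:
    (hcomm : ∀ e : E, α * ε e = ε e * α) :
    ∃ y : E, IsUnit y ∧ α = ε y ∧
      ∃ lam : L, lam ≠ 0 ∧ y * σ y * b = lam • a :=
  unit_of_int_isom_commuting_with_embedding_general L A E σ ε hinj hmaxcomm θ hθmul hθinv hθcompat a
    b haσ hbσ ai bi hai hbi α αi hαi hαi' hiso hcomm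
end

section
/- Let A = End_L(V) with adjoint involution τ of a nondegenerate hermitian form b over L/K, and let ι : (E,σ) → (A,τ) be an embedding of algebras with involution, where E has rank dim_L V. Then there exists a σ-fixed unit a ∈ F^× such that b is isometric to the form T_a(x,y) = Tr_{E/L}(a x σ(y)) on E. -/
/-!
Through `ι`, `V` is a faithful module over the semisimple ring `E`, so some `v ∈ V` has zero
annihilator and, the dimensions being equal, `x ↦ ι x v` is an isomorphism `E ≃ V`. The trace form
of the étale algebra `E` is nondegenerate, so `x ↦ b (ι x v) v` is `Tr (a * ·)` for some `a`, and
the adjoint relation `b (ι e x) y = b x (ι (σ e) y)` turns `b (ι x v) (ι y v)` into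
`Tr (a * x * σ y)`. Hermitian symmetry of `b` then forces `σ a = a`, and nondegeneracy of `b`
makes `a` a non-zero-divisor, hence a unit of the artinian ring `E`.
-/

universe u

theorem Algebra.trace_pi_apply {R ι : Type*} [CommRing R] [Fintype ι] [DecidableEq ι]
    {A : ι → Type*} [∀ i, CommRing (A i)] [∀ i, Algebra R (A i)] [∀ i, Module.Free R (A i)]
    [∀ i, Module.Finite R (A i)] (x : Π i, A i) :
    Algebra.trace R (Π i, A i) x = ∑ i, Algebra.trace R (A i) (x i) := by
  let b i := Module.Free.chooseBasis R (A i)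
  simp only [Algebra.trace_eq_matrix_trace (Pi.basis b), Algebra.trace_eq_matrix_trace (b _),
    Matrix.trace, Matrix.diag, Algebra.leftMulMatrix_eq_repr_mul, Fintype.sum_sigma]
  simp

theorem Algebra.traceForm_nondegenerate_of_etale (K A : Type*) [Field K] [CommRing A]
    [Algebra K A] [Algebra.Etale K A] : (Algebra.traceForm K A).Nondegenerate := by
  classical
  obtain ⟨I, _, Ai, _, _, e, hAi⟩ := (Algebra.Etale.iff_exists_algEquiv_prod K A).mp ‹_›
  have := Fintype.ofFinite I
  have (i : I) := (hAi i).1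
  have (i : I) := (hAi i).2
  refine (Algebra.traceForm_isSymm K (S := A)).isRefl.nondegenerate_iff_separatingLeft.2
    fun z hz ↦ ?_
  suffices ∀ i, e z i = 0 from e.injective (by rw [map_zero]; exact funext this)
  intro i
  refine (traceForm_nondegenerate K (Ai i)).1 _ fun u ↦ ?_
  have := hz (e.symm (Pi.single i u))
  rwa [Algebra.traceForm_apply, ← Algebra.trace_eq_of_algEquiv e, map_mul, e.apply_symm_apply,
    Algebra.trace_pi_apply, Finset.sum_eq_single i (by simp_all) (by simp),
    Pi.mul_apply, Pi.single_eq_same] at this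

theorem IsSemisimpleRing.exists_smul_left_injective (R M : Type*) [CommRing R]
    [IsSemisimpleRing R] [AddCommGroup M] [Module R M] [FaithfulSMul R M] :
    ∃ v : M, Function.Injective fun r : R ↦ r • v := by
  let ann (v : M) : Ideal R := LinearMap.ker (LinearMap.toSpanSingleton R M v)
  have mem_ann {r : R} {v : M} : r ∈ ann v ↔ r • v = 0 := Iff.rfl
  obtain ⟨_, ⟨v, rfl⟩, hmin⟩ := wellFounded_lt.has_min (Set.range ann) ⟨_, 0, rfl⟩
  obtain ⟨e, he, hann⟩ := IsSemisimpleRing.ideal_eq_span_idempotent (ann v)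
  have hev : e • v = 0 := mem_ann.1 (hann ▸ Ideal.mem_span_singleton_self e)
  -- `ann v = (e)` is minimal, and `ann (v + e • w) ≤ ann v`; so `e` kills `v + e • w`, i.e. `w`.
  have hle (w : M) : ann (v + e • w) ≤ ann v := by
    intro r hr
    obtain ⟨c, hc⟩ : ∃ c, c * e = (1 - e) * r := by
      rw [← Ideal.mem_span_singleton', ← hann, mem_ann]
      have hre : (1 - e) * r * e = 0 := by linear_combination -r * he.eq
      calc ((1 - e) * r) • v = ((1 - e) * r) • v + ((1 - e) * r * e) • w := by
            rw [hre, zero_smul, add_zero]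
        _ = ((1 - e) * r) • (v + e • w) := by rw [smul_add, smul_smul]
        _ = 0 := by rw [mul_smul, mem_ann.1 hr, smul_zero]
    have hr' : r = e * r := by linear_combination (e - 1) * hc - (c + r) * he.eq
    rw [mem_ann, hr', mul_comm, ← smul_smul, hev, smul_zero]
  have he0 : e = 0 := by
    refine FaithfulSMul.eq_of_smul_eq_smul (α := M) fun w ↦ ?_
    have hew : e ∈ ann (v + e • w) := by
      rw [(hle w).lt_or_eq.resolve_left (hmin _ ⟨_, rfl⟩), hann]
      exact Ideal.mem_span_singleton_self e
    rwa [mem_ann, smul_add, hev, smul_smul, he.eq, zero_add, ← zero_smul R w] at hew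
  refine ⟨v, show Function.Injective (LinearMap.toSpanSingleton R M v) from ?_⟩
  rw [← LinearMap.ker_eq_bot]
  exact hann.trans (Ideal.span_singleton_eq_bot.2 he0)

theorem Algebra.trace_ringEquiv_apply {R S : Type*} [CommRing R] [CommRing S] [Algebra R S]
    (s : R ≃+* R) (σ : S ≃+* S) (h : ∀ r, σ (algebraMap R S r) = algebraMap R S (s r)) (x : S) :
    Algebra.trace R S (σ x) = s (Algebra.trace R S x) := by
  rw [Algebra.trace_eq_of_equiv_equiv s σ (RingHom.ext fun r ↦ (h r).symm) x,
    RingEquiv.apply_symm_apply]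

theorem exists_trace_mul_mul_eq_of_compat {L V E : Type*} [Field L] [AddCommGroup V]
    [Module L V] [CommRing E] [Algebra L E] [FiniteDimensional L E] {b : V → V → L}
    (hb_addl : ∀ x x' y, b (x + x') y = b x y + b x' y)
    (hb_smull : ∀ (l : L) x y, b (l • x) y = l * b x y)
    {σ : E → E} (hσ : ∀ x, σ (σ x) = x) {ι : E →ₐ[L] Module.End L V}
    (hcompat : ∀ (e : E) (x y : V), b (ι e x) y = b x (ι (σ e) y))
    (hnd : (Algebra.traceForm L E).Nondegenerate) (v : V) :
    ∃ a : E, ∀ x y : E, b (ι x v) (ι y v) = Algebra.trace L E (a * x * σ y) := by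
  let ℓ : E →ₗ[L] L :=
    { toFun x := b (ι x v) v
      map_add' x y := by simp only [map_add, LinearMap.add_apply, hb_addl]
      map_smul' l x := by simp only [map_smul, LinearMap.smul_apply, hb_smull, smul_eq_mul,
        RingHom.id_apply] }
  refine ⟨((Algebra.traceForm L E).toDual hnd).symm ℓ, fun x y ↦ ?_⟩
  rw [mul_assoc, mul_comm x, ← Algebra.traceForm_apply,
    LinearMap.BilinForm.apply_toDual_symm_apply]
  calc b (ι x v) (ι y v) = b (ι (σ y) (ι x v)) v := by rw [hcompat (σ y), hσ]
    _ = ℓ (σ y * x) := by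
      change _ = b (ι (σ y * x) v) v
      rw [map_mul, Module.End.mul_apply]

theorem map_eq_self_of_trace_mul_mul_hermitian {L E F : Type*} [CommRing L] [CommRing E]
    [Algebra L E]
    [FunLike F E E] [MonoidHomClass F E E] {s : L → L} {σ : F} (hσ : ∀ x, σ (σ x) = x)
    (hs : ∀ z, Algebra.trace L E (σ z) = s (Algebra.trace L E z))
    (hnd : (Algebra.traceForm L E).Nondegenerate) {a : E}
    (hherm : ∀ x y, Algebra.trace L E (a * y * σ x) = s (Algebra.trace L E (a * x * σ y))) :
    σ a = a := by
  rw [← sub_eq_zero]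
  refine hnd.1 _ fun w ↦ ?_
  have := hherm (σ w) 1
  rw [map_one σ, mul_one, mul_one, hσ, ← hs, map_mul σ, hσ] at this
  rw [Algebra.traceForm_apply, sub_mul, map_sub, this, sub_self]

theorem isUnit_of_trace_mul_mul_separatingLeft {R E : Type*} [CommRing R] [CommRing E]
    [Algebra R E] [IsArtinianRing E] {σ : E → E} {a : E}
    (h : ∀ x, (∀ y, Algebra.trace R E (a * x * σ y) = 0) → x = 0) : IsUnit a :=
  IsArtinianRing.isUnit_of_mem_nonZeroDivisors <| mem_nonZeroDivisors_iff_right.2 fun x hx ↦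
    h x fun y ↦ by rw [mul_comm a, hx, zero_mul, map_zero]

theorem hermitian_form_isometric_trace_form_of_embedding_general
    (K L : Type u) [Field K] [Field L] [Algebra K L]
    (s : L ≃ₐ[K] L)
    (V : Type u) [AddCommGroup V] [Module L V] [FiniteDimensional L V]
    (b : V → V → L)
    (hb_addl : ∀ x x' y, b (x + x') y = b x y + b x' y)
    (hb_smull : ∀ (l : L) x y, b (l • x) y = l * b x y)
    (hb_herm : ∀ x y, b y x = s (b x y))
    (hb_nd : ∀ x, (∀ y, b x y = 0) → x = 0)
    (E : Type u) [CommRing E] [Algebra L E] [Algebra K E]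
    [Module.Finite L E] [Algebra.Etale L E]
    (hrank : Module.finrank L E = Module.finrank L V)
    (σ : E →ₐ[K] E) (hσ : ∀ x, σ (σ x) = x)
    (hσL : ∀ l : L, σ (algebraMap L E l) = algebraMap L E (s l))
    (ι : E →ₐ[L] Module.End L V) (hinj : Function.Injective ι)
    (hcompat : ∀ (e : E) (x y : V), b (ι e x) y = b x (ι (σ e) y)) :
    ∃ a : E, IsUnit a ∧ σ a = a ∧
      ∃ φ : E ≃ₗ[L] V, ∀ x y : E,
        b (φ x) (φ y) = Algebra.trace L E (a * x * σ y) := by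
  have : IsReduced E := Algebra.FormallyUnramified.isReduced_of_field L E
  have : IsArtinianRing E := isArtinian_of_tower L inferInstance
  have := IsArtinianRing.isSemisimpleRing_of_isReduced E
  have hnd := Algebra.traceForm_nondegenerate_of_etale L E
  have hTr := Algebra.trace_ringEquiv_apply s.toRingEquiv
    (RingEquiv.ofBijective σ (Function.Involutive.bijective hσ)) hσL
  let : Module E V := Module.compHom V (ι : E →+* Module.End L V)
  have : FaithfulSMul E V := ⟨fun h ↦ hinj (LinearMap.ext h)⟩
  obtain ⟨v, hv⟩ := IsSemisimpleRing.exists_smul_left_injective E V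
  let φ : E ≃ₗ[L] V :=
    LinearMap.linearEquivOfInjective ((LinearMap.applyₗ v).comp ι.toLinearMap) hv hrank
  obtain ⟨a, hφ⟩ : ∃ a : E, ∀ x y, b (φ x) (φ y) = Algebra.trace L E (a * x * σ y) :=
    exists_trace_mul_mul_eq_of_compat hb_addl hb_smull hσ hcompat hnd v
  have hunit : IsUnit a := isUnit_of_trace_mul_mul_separatingLeft (R := L) (σ := σ)
    fun x hx ↦ φ.map_eq_zero_iff.1 <| hb_nd _ fun y ↦ by rw [← φ.apply_symm_apply y, hφ, hx]
  have hfix : σ a = a := map_eq_self_of_trace_mul_mul_hermitian hσ hTr hnd fun x y ↦ by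
    rw [← hφ, ← hφ, hb_herm]
    rfl
  exact ⟨a, hunit, hfix, φ, hφ⟩

/-- Let `A = End_L(V)` with the adjoint involution `τ` of a nondegenerate
hermitian form `b` over a quadratic extension `L/K` (with nontrivial automorphism `s`), and let
`ι : (E,σ) → (A,τ)` be an embedding of algebras with involution, where `E` is an étale
`L`-algebra of rank `dim_L V` with an involution `σ` of the second kind.  Then there exists a
`σ`-fixed unit `a ∈ F^×` such that `b` is isometric to the hermitian trace form
`T_a(x,y) = Tr_{E/L}(a·x·σ(y))` on `E`. -/
theorem hermitian_form_isometric_trace_form_of_embedding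
    (K L : Type u) [Field K] [Field L] [Algebra K L]
    (hKL : Module.finrank K L = 2)
    (s : L ≃ₐ[K] L) (hs : s ≠ AlgEquiv.refl) (hss : ∀ l, s (s l) = l)
    (V : Type u) [AddCommGroup V] [Module L V] [FiniteDimensional L V]
    (b : V → V → L)
    (hb_addl : ∀ x x' y, b (x + x') y = b x y + b x' y)
    (hb_addr : ∀ x y y', b x (y + y') = b x y + b x y')
    (hb_smull : ∀ (l : L) x y, b (l • x) y = l * b x y)
    (hb_smulr : ∀ (l : L) x y, b x (l • y) = s l * b x y)
    (hb_herm : ∀ x y, b y x = s (b x y))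
    (hb_nd : ∀ x, (∀ y, b x y = 0) → x = 0)
    (E : Type u) [CommRing E] [Algebra L E] [Algebra K E] [IsScalarTower K L E]
    [Module.Finite L E] [Algebra.Etale L E]
    (hrank : Module.finrank L E = Module.finrank L V)
    (σ : E →ₐ[K] E) (hσ : ∀ x, σ (σ x) = x)
    (hσL : ∀ l : L, σ (algebraMap L E l) = algebraMap L E (s l))
    (ι : E →ₐ[L] Module.End L V) (hinj : Function.Injective ι)
    (hcompat : ∀ (e : E) (x y : V), b (ι e x) y = b x (ι (σ e) y)) :
    ∃ a : E, IsUnit a ∧ σ a = a ∧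
      ∃ φ : E ≃ₗ[L] V, ∀ x y : E,
        b (φ x) (φ y) = Algebra.trace L E (a * x * σ y) :=
  hermitian_form_isometric_trace_form_of_embedding_general K L s V b hb_addl hb_smull hb_herm hb_nd
    E hrank σ hσ hσL ι hinj hcompat
end

section
/- Let K be a field of characteristic ≠ 2, F a finite étale K-algebra of rank r, d ∈ F^×, and E = F[X]/(X^2 − d) with x the image of X and σ the F-linear involution sending x to −x. Then the discriminant algebra Δ(E) of E over K is isomorphic as a K-algebra to K[Y]/(Y^2 − (−1)^r N_{E/K}(x)). -/
/-!
By transitivity of the trace, the Gram matrix of `T_{E/K}` in the basis `bF i • bE p` has entries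
`Tr_{F/K}(bF i * bF j * Tr_{E/F}(bE p * bE q))`. In the basis `1, x` the form `T_{E/F}` is
`diag(2, 2d)`, so this matrix is block diagonal and
`det T_{E/K} = (det T_{F/K})² N_{F/K}(4d) = (2ʳ det T_{F/K})² N_{F/K}(d)`.
On the other side `N_{E/F}(x) = -d`, hence `(-1)ʳ N_{E/K}(x) = N_{F/K}(d)`.
As `F` is a product of finite separable field extensions of `K`, `T_{F/K}` is nondegenerate, so
the two constants differ by a nonzero square `c²`, and `Y ↦ cY` identifies the two quadratic
algebras.
-/

open Polynomial

namespace AdjoinRoot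

variable {K : Type*} [Field K]

theorem root_X_sq_sub_C_sq (a : K) :
    root (X ^ 2 - C a) ^ 2 = algebraMap K (AdjoinRoot (X ^ 2 - C a)) a := by
  have := eval₂_root (X ^ 2 - C a)
  rwa [eval₂_sub, eval₂_pow, eval₂_X, eval₂_C, sub_eq_zero] at this

noncomputable def algHomXSqSubC {a b : K} (c : K) (h : a = c ^ 2 * b) :
    AdjoinRoot (X ^ 2 - C a) →ₐ[K] AdjoinRoot (X ^ 2 - C b) :=
  liftAlgHom _ (Algebra.ofId _ _) (algebraMap K _ c * root _) <| by
    change aeval _ _ = 0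
    rw [map_sub, map_pow, aeval_X, aeval_C, mul_pow, root_X_sq_sub_C_sq, ← map_pow, ← map_mul,
      h, sub_self]

theorem algHomXSqSubC_root {a b : K} (c : K) (h : a = c ^ 2 * b) :
    algHomXSqSubC c h (root _) = algebraMap K _ c * root _ :=
  liftAlgHom_root ..

theorem nonempty_algEquiv_X_sq_sub_C_of_eq_sq_mul {a b c : K} (hc : c ≠ 0)
    (h : a = c ^ 2 * b) :
    Nonempty (AdjoinRoot (X ^ 2 - C a) ≃ₐ[K] AdjoinRoot (X ^ 2 - C b)) := by
  have h' : b = c⁻¹ ^ 2 * a := by rw [h]; field_simp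
  refine ⟨.ofAlgHom (algHomXSqSubC c h) (algHomXSqSubC c⁻¹ h') ?_ ?_⟩ <;>
    · refine algHom_ext ?_
      rw [AlgHom.comp_apply, algHomXSqSubC_root, map_mul, AlgHom.commutes, algHomXSqSubC_root,
        ← mul_assoc, ← map_mul]
      simp [hc]

end AdjoinRoot

namespace Algebra

theorem trace_pi {R : Type*} [CommRing R] {I : Type*} [Fintype I] [DecidableEq I]
    {A : I → Type*} [∀ i, CommRing (A i)] [∀ i, Algebra R (A i)] [∀ i, Module.Free R (A i)]
    [∀ i, Module.Finite R (A i)] (y : ∀ i, A i) :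
    trace R (∀ i, A i) y = ∑ i, trace R (A i) (y i) := by
  let b i := Module.Free.chooseBasis R (A i)
  rw [trace_eq_matrix_trace (Pi.basis b), Matrix.trace, Fintype.sum_sigma]
  refine Finset.sum_congr rfl fun i _ => ?_
  rw [trace_eq_matrix_trace (b i), Matrix.trace]
  refine Finset.sum_congr rfl fun k _ => ?_
  simp [leftMulMatrix_eq_repr_mul, Pi.basis_repr, Pi.basis_apply]

theorem traceForm_nondegenerate_iff {R S : Type*} [CommRing R] [CommRing S] [Algebra R S] :
    (traceForm R S).Nondegenerate ↔ ∀ y : S, (∀ z, trace R S (y * z) = 0) → y = 0 :=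
  LinearMap.IsRefl.nondegenerate_iff_separatingLeft (traceForm_isSymm R).isRefl

section Etale

variable {K : Type*} [Field K]

theorem traceForm_pi_nondegenerate {I : Type*} [Finite I] {L : I → Type*} [∀ i, Field (L i)]
    [∀ i, Algebra K (L i)] [∀ i, FiniteDimensional K (L i)]
    [∀ i, Algebra.IsSeparable K (L i)] :
    (traceForm K (∀ i, L i)).Nondegenerate := by
  classical
  have := Fintype.ofFinite I
  refine traceForm_nondegenerate_iff.mpr fun y hy => funext fun i => ?_
  refine traceForm_nondegenerate_iff.mp (traceForm_nondegenerate K (L i)) (y i) fun z => ?_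
  have := hy (Pi.single i z)
  rwa [trace_pi, Fintype.sum_eq_single i fun j hj => by simp [Pi.single_eq_of_ne hj],
    Pi.mul_apply, Pi.single_eq_same] at this

theorem traceForm_nondegenerate_of_algEquiv {F L : Type*} [CommRing F] [CommRing L]
    [Algebra K F] [Algebra K L] (e : F ≃ₐ[K] L) (h : (traceForm K L).Nondegenerate) :
    (traceForm K F).Nondegenerate := by
  refine traceForm_nondegenerate_iff.mpr fun y hy => e.map_eq_zero_iff.mp ?_
  refine traceForm_nondegenerate_iff.mp h (e y) fun z => ?_
  have := hy (e.symm z)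
  rwa [← trace_eq_of_algEquiv e, map_mul, e.apply_symm_apply] at this

variable {F : Type*} [CommRing F] [Algebra K F] [Etale K F]

theorem Etale.traceForm_nondegenerate : (traceForm K F).Nondegenerate := by
  obtain ⟨I, _, L, _, _, e, hL⟩ := (Etale.iff_exists_algEquiv_prod K F).mp ‹_›
  have := fun i => (hL i).1
  have := fun i => (hL i).2
  exact traceForm_nondegenerate_of_algEquiv e traceForm_pi_nondegenerate

theorem Etale.det_traceMatrix_ne_zero {ι : Type*} [Fintype ι] [DecidableEq ι]
    (b : Module.Basis ι K F) : (traceMatrix K b).det ≠ 0 := by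
  rw [traceMatrix_of_basis, ← LinearMap.BilinForm.nondegenerate_iff_det_ne_zero]
  exact Etale.traceForm_nondegenerate

end Etale

section Tower

variable {K F E : Type*} [CommRing K] [CommRing F] [CommRing E] [Algebra K F] [Algebra F E]
  [Algebra K E] [IsScalarTower K F E] {ι κ : Type*} [Fintype ι] [Fintype κ]

theorem traceMatrix_smulTower_apply (bF : Module.Basis ι K F) (bE : Module.Basis κ F E)
    (i j : ι) (p q : κ) :
    traceMatrix K (bF.smulTower bE) (i, p) (j, q) =
      trace K F (bF i * bF j * traceMatrix F bE p q) := by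
  simp only [traceMatrix_apply, traceForm_apply]
  rw [← trace_trace_of_basis bF bE, bF.smulTower_apply, bF.smulTower_apply, smul_mul_smul_comm,
    map_smul, smul_eq_mul]

variable [DecidableEq ι] [DecidableEq κ]

theorem traceMatrix_mul_leftMulMatrix (b : Module.Basis ι K F) (c : F) :
    traceMatrix K b * leftMulMatrix b c = .of fun i j => trace K F (b i * b j * c) := by
  ext i j
  have hc : c * b j = ∑ k, leftMulMatrix b c k j • b k := by
    simp_rw [leftMulMatrix_eq_repr_mul, b.sum_repr]
  rw [Matrix.mul_apply, Matrix.of_apply, mul_assoc, mul_comm (b j), hc, Finset.mul_sum, map_sum]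
  simp [traceMatrix_apply, mul_comm]

theorem det_traceMatrix_smulTower_of_isDiag (bF : Module.Basis ι K F) (bE : Module.Basis κ F E)
    (h : (traceMatrix F bE).IsDiag) :
    (traceMatrix K (bF.smulTower bE)).det =
      (traceMatrix K bF).det ^ Fintype.card κ * norm K (traceMatrix F bE).det := by
  have hblock : traceMatrix K (bF.smulTower bE) = Matrix.blockDiagonal fun p =>
      traceMatrix K bF * leftMulMatrix bF (traceMatrix F bE p p) := by
    ext ⟨i, p⟩ ⟨j, q⟩
    rw [traceMatrix_smulTower_apply, Matrix.blockDiagonal_apply, traceMatrix_mul_leftMulMatrix]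
    by_cases hpq : p = q
    · subst hpq; simp
    · rw [h hpq, mul_zero, map_zero, if_neg hpq]
  rw [hblock, Matrix.det_blockDiagonal, ← h.diagonal_diag, Matrix.det_diagonal, map_prod]
  simp [Matrix.det_mul, ← norm_eq_matrix_det bF, Finset.prod_mul_distrib]

end Tower

section SquareRoot

variable {F E : Type*} [CommRing F] [CommRing E] [Algebra F E] {d : F} {x : E}
  (b : Module.Basis (Fin 2) F E) (hb0 : b 0 = 1) (hb1 : b 1 = x) (hx : x ^ 2 = algebraMap F E d)
include hb0 hb1 hx

theorem leftMulMatrix_eq_of_sq_eq : leftMulMatrix b x = !![0, d; 1, 0] := by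
  have hx0 : x * b 0 = b 1 := by rw [hb0, hb1, mul_one]
  have hx1 : x * b 1 = d • b 0 := by rw [hb1, ← sq, hx, hb0, Algebra.algebraMap_eq_smul_one]
  ext i j
  fin_cases i <;> fin_cases j <;> simp [leftMulMatrix_eq_repr_mul, hx0, hx1]

theorem norm_eq_neg_of_sq_eq : norm F x = -d := by
  rw [norm_eq_matrix_det b, leftMulMatrix_eq_of_sq_eq b hb0 hb1 hx, Matrix.det_fin_two_of]
  ring

theorem traceMatrix_eq_of_sq_eq : traceMatrix F b = !![2, 0; 0, 2 * d] := by
  have htr1 : trace F E 1 = 2 := by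
    rw [← map_one (algebraMap F E), trace_algebraMap_of_basis b]; simp
  have htrx : trace F E x = 0 := by
    rw [trace_eq_matrix_trace b, leftMulMatrix_eq_of_sq_eq b hb0 hb1 hx, Matrix.trace_fin_two_of,
      add_zero]
  have htrd : trace F E (x * x) = 2 * d := by
    rw [← sq, hx, trace_algebraMap_of_basis b]; simp
  ext i j
  fin_cases i <;> fin_cases j <;> simp [traceMatrix_apply, hb0, hb1, htr1, htrx, htrd]

end SquareRoot

end Algebra

theorem discriminant_algebra_iso_general
    (K : Type u) [Field K] (hK : (2 : K) ≠ 0)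
    (F : Type u) [CommRing F] [Algebra K F] [Algebra.Etale K F]
    (r : ℕ) (bF : Module.Basis (Fin r) K F)
    (d : F)
    (E : Type u) [CommRing E] [Algebra F E] [Algebra K E] [IsScalarTower K F E]
    (x : E) (hx : x ^ 2 = algebraMap F E d)
    (bE : Module.Basis (Fin 2) F E) (hbE0 : bE 0 = 1) (hbE1 : bE 1 = x) :
    Nonempty
      (AdjoinRoot ((X : K[X]) ^ 2 -
          C ((Matrix.of fun p q : Fin r × Fin 2 =>
              Algebra.trace K E (bF.smulTower bE p * bF.smulTower bE q)).det))
        ≃ₐ[K]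
       AdjoinRoot ((X : K[X]) ^ 2 - C ((-1) ^ r * Algebra.norm K x))) := by
  have := Module.Free.of_basis bE
  have norm_algebraMap_mul (c : K) (y : F) : Algebra.norm K (algebraMap K F c * y) =
      c ^ r * Algebra.norm K y := by
    rw [map_mul, Algebra.norm_algebraMap_of_basis bF, Fintype.card_fin]
  have hTE := Algebra.traceMatrix_eq_of_sq_eq bE hbE0 hbE1 hx
  have hdisc : (Algebra.traceMatrix K (bF.smulTower bE)).det =
      (2 ^ r * (Algebra.traceMatrix K bF).det) ^ 2 * Algebra.norm K d := by
    have hdiag : (Algebra.traceMatrix F bE).IsDiag := by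
      rw [hTE]; intro i j hij; fin_cases i <;> fin_cases j <;> simp_all
    rw [Algebra.det_traceMatrix_smulTower_of_isDiag bF bE hdiag, hTE, Matrix.det_fin_two_of,
      show (2 : F) * (2 * d) - 0 * 0 = algebraMap K F 2 * (algebraMap K F 2 * d) by
        rw [map_ofNat]; ring,
      norm_algebraMap_mul, norm_algebraMap_mul, Fintype.card_fin]
    ring
  have hnorm : (-1) ^ r * Algebra.norm K x = Algebra.norm K d := by
    rw [← Algebra.norm_norm (S := F), Algebra.norm_eq_neg_of_sq_eq bE hbE0 hbE1 hx,
      show -d = algebraMap K F (-1) * d by simp, norm_algebraMap_mul, ← mul_assoc, ← mul_pow]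
    simp
  rw [hnorm]
  exact AdjoinRoot.nonempty_algEquiv_X_sq_sub_C_of_eq_sq_mul
    (mul_ne_zero (pow_ne_zero r hK) (Algebra.Etale.det_traceMatrix_ne_zero bF)) hdisc

/-- Let `K` be a field of characteristic `≠ 2`, `F` a finite étale `K`-algebra
of rank `r`, `d ∈ F^×`, and `E = F[X]/(X² − d)` with `x` the image of `X` and `σ` the
`F`-linear involution sending `x` to `−x`.  Then the discriminant algebra
`Δ(E) = K[Y]/(Y² − det(T_{E/K}))` of `E` over `K` is isomorphic as a `K`-algebra to
`K[Y]/(Y² − (−1)^r N_{E/K}(x))`. -/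
theorem discriminant_algebra_iso
    (K : Type u) [Field K] (hK : (2 : K) ≠ 0)
    (F : Type u) [CommRing F] [Algebra K F] [Module.Finite K F] [Algebra.Etale K F]
    (r : ℕ) (bF : Module.Basis (Fin r) K F)
    (d : F) (hd : IsUnit d)
    (E : Type u) [CommRing E] [Algebra F E] [Algebra K E] [IsScalarTower K F E]
    (x : E) (hx : x ^ 2 = algebraMap F E d)
    (bE : Module.Basis (Fin 2) F E) (hbE0 : bE 0 = 1) (hbE1 : bE 1 = x)
    (σ : E →ₐ[F] E) (hσ : ∀ y, σ (σ y) = y) (hσx : σ x = -x) :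
    Nonempty
      (AdjoinRoot ((X : K[X]) ^ 2 -
          C ((Matrix.of fun p q : Fin r × Fin 2 =>
              Algebra.trace K E (bF.smulTower bE p * bF.smulTower bE q)).det))
        ≃ₐ[K]
       AdjoinRoot ((X : K[X]) ^ 2 - C ((-1) ^ r * Algebra.norm K x))) :=
  discriminant_algebra_iso_general K hK F r bF d E x hx bE hbE0 hbE1
end

section
/- Let K = K and E an étale K-algebra of rank n = 2r with involution σ whose fixed algebra F has rank r, write E = F(√d). Then disc(E,σ) := det(T) equals (−1)^r disc(E) in K^×/K^{×2}, where T(x,y) = Tr_{E/K}(x σ(y)) and disc(E) = det of the usual trace form Tr_{E/K}(xy). Consequently, for every a ∈ F^×, the discriminant disc(T_a) = (−1)^r det(T_a) equals disc(E) in K^×/K^{×2}. -/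
universe u

/-!
Since `σ` fixes `F`, the form `T_a(u, v) = Tr_{E/K}(u · a σ(v))` is the trace form composed with
the `F`-linear map `y ↦ a σ(y)`, so its Gram determinant is `disc(E)` times `det_K(y ↦ a σ(y))`.
Over `F` this map has matrix `diag(a, -a)` in the basis `(1, √d)`, so its `F`-determinant is
`-a²`, and its `K`-determinant is the norm `N_{F/K}(-a²) = (-1)^r N_{F/K}(a)²`.
-/

open Module

theorem det_traceForm_compl₂ {K E ι : Type*} [CommRing K] [CommRing E] [Algebra K E]
    [Fintype ι] [DecidableEq ι] (b : Basis ι K E) (f : E →ₗ[K] E) :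
    (Matrix.of fun i j => Algebra.trace K E (b i * f (b j))).det =
      (Matrix.of fun i j => Algebra.trace K E (b i * b j)).det * LinearMap.det f := by
  have gram (B : LinearMap.BilinForm K E) :
      LinearMap.toMatrix₂ b b B = Matrix.of fun i j => B (b i) (b j) := by
    ext; rw [LinearMap.toMatrix₂_apply, Matrix.of_apply]
  have h := LinearMap.toMatrix₂_compl₂ b b b (Algebra.traceForm K E) f
  simp only [gram, LinearMap.compl₂_apply, Algebra.traceForm_apply] at h
  rw [h, Matrix.det_mul, LinearMap.det_toMatrix]

theorem LinearMap.det_eq_prod_of_apply_basis {R M ι : Type*} [CommRing R] [AddCommGroup M]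
    [Module R M] [Fintype ι] [DecidableEq ι] (b : Basis ι R M) (f : M →ₗ[R] M) (c : ι → R)
    (hf : ∀ i, f (b i) = c i • b i) :
    LinearMap.det f = ∏ i, c i := by
  have : LinearMap.toMatrix b b f = Matrix.diagonal c := by
    ext i j
    rw [LinearMap.toMatrix_apply, hf, map_smul, b.repr_self, Finsupp.smul_apply,
      Finsupp.single_apply, Matrix.diagonal_apply]
    split_ifs <;> simp_all [eq_comm]
  rw [← LinearMap.det_toMatrix b, this, Matrix.det_diagonal]

theorem AlgHom.det_eq_neg_one_of_basis_fin_two {F E : Type*} [CommRing F] [CommRing E]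
    [Algebra F E] (b : Basis (Fin 2) F E) (hb0 : b 0 = 1) (σ : E →ₐ[F] E)
    (hσ : σ (b 1) = -b 1) :
    LinearMap.det σ.toLinearMap = -1 := by
  rw [LinearMap.det_eq_prod_of_apply_basis b _ ![1, -1], Fin.prod_univ_two]
  · simp
  · intro i
    fin_cases i
    · simp [hb0]
    · simp [hσ]

theorem det_restrictScalars_lmul_comp_algHom {K F E ι : Type*} [CommRing K] [CommRing F]
    [CommRing E] [Algebra K F] [Algebra F E] [Algebra K E] [IsScalarTower K F E] [Fintype ι]
    (bF : Basis ι K F) (bE : Basis (Fin 2) F E) (hbE0 : bE 0 = 1) (σ : E →ₐ[F] E)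
    (hσ : σ (bE 1) = -bE 1) (a : F) :
    LinearMap.det ((Algebra.lmul F E (algebraMap F E a) ∘ₗ σ.toLinearMap).restrictScalars K) =
      (-1) ^ Fintype.card ι * Algebra.norm K a ^ 2 := by
  have := Module.Free.of_basis bF
  have := Module.Free.of_basis bE
  have hneg : (-1 : F) = algebraMap K F (-1) := by simp
  rw [LinearMap.det_restrictScalars, LinearMap.det_comp, ← Algebra.norm_apply,
    Algebra.norm_algebraMap_of_basis bE, AlgHom.det_eq_neg_one_of_basis_fin_two bE hbE0 σ hσ,
    Fintype.card_fin, mul_neg_one, neg_eq_neg_one_mul, hneg, map_mul,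
    Algebra.norm_algebraMap_of_basis bF, map_pow]

theorem disc_trace_form_of_involution_general
    (K : Type u) [Field K]
    (F : Type u) [CommRing F] [Algebra K F]
    (r : ℕ) (bF : Module.Basis (Fin r) K F)
    (E : Type u) [CommRing E] [Algebra F E] [Algebra K E] [IsScalarTower K F E]
    (x : E)
    (bE : Module.Basis (Fin 2) F E) (hbE0 : bE 0 = 1) (hbE1 : bE 1 = x)
    (σ : E →ₐ[K] E) (hσx : σ x = -x)
    (hσF : ∀ f : F, σ (algebraMap F E f) = algebraMap F E f) :
    (∃ c : K, c ≠ 0 ∧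
      (Matrix.of fun p q : Fin r × Fin 2 =>
          Algebra.trace K E (bF.smulTower bE p * σ (bF.smulTower bE q))).det
        = (-1) ^ r * c ^ 2 *
          (Matrix.of fun p q : Fin r × Fin 2 =>
            Algebra.trace K E (bF.smulTower bE p * bF.smulTower bE q)).det) ∧
    (∀ a : F, IsUnit a → ∃ c : K, c ≠ 0 ∧
      (-1 : K) ^ r *
        (Matrix.of fun p q : Fin r × Fin 2 =>
          Algebra.trace K E
            (algebraMap F E a * bF.smulTower bE p * σ (bF.smulTower bE q))).det
        = c ^ 2 *
          (Matrix.of fun p q : Fin r × Fin 2 =>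
            Algebra.trace K E (bF.smulTower bE p * bF.smulTower bE q)).det) := by
  classical
  set β := bF.smulTower bE
  let σF : E →ₐ[F] E := { σ with commutes' := hσF }
  have key (a : F) :
      (Matrix.of fun p q => Algebra.trace K E (algebraMap F E a * β p * σ (β q))).det =
        (-1) ^ r * Algebra.norm K a ^ 2 *
          (Matrix.of fun p q => Algebra.trace K E (β p * β q)).det := by
    have h := det_traceForm_compl₂ β
      ((Algebra.lmul F E (algebraMap F E a) ∘ₗ σF.toLinearMap).restrictScalars K)
    rw [det_restrictScalars_lmul_comp_algHom bF bE hbE0 σF (by rw [hbE1]; exact hσx),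
      Fintype.card_fin] at h
    simp only [LinearMap.restrictScalars_apply, LinearMap.comp_apply, Algebra.coe_lmul_eq_mul,
      LinearMap.mul_apply_apply, mul_left_comm _ (algebraMap F E a), ← mul_assoc] at h
    exact h.trans (by ring)
  refine ⟨⟨1, one_ne_zero, by simpa using key 1⟩, fun a ha => ⟨Algebra.norm K a,
    (ha.map (Algebra.norm K)).ne_zero, ?_⟩⟩
  rw [key, ← mul_assoc, ← mul_assoc, ← pow_add, ← two_mul, pow_mul, neg_one_sq, one_pow,
    one_mul]

/-- Let `E` be an étale `K`-algebra of rank `n = 2r` with involution `σ`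
whose fixed algebra `F` has rank `r`, and write `E = F(√d)` (so `E` has `F`-basis `(1, x)`
with `x² = d` and `σ(x) = −x`, `σ` fixing `F`).  Then `disc(E,σ) := det(T)` equals
`(−1)^r·disc(E)` in `K^×/K^{×2}`, where `T(x,y) = Tr_{E/K}(x σ(y))` and `disc(E)` is the
determinant of the usual trace form `Tr_{E/K}(xy)`; and consequently, for every `a ∈ F^×`,
`disc(T_a) = (−1)^r det(T_a)` equals `disc(E)` in `K^×/K^{×2}`.  (All Gram determinants are
taken with respect to the `K`-basis `β = bF.smulTower bE` of `E`.) -/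
theorem disc_trace_form_of_involution
    (K : Type u) [Field K] (hK : (2 : K) ≠ 0)
    (F : Type u) [CommRing F] [Algebra K F] [Module.Finite K F]
    (r : ℕ) (bF : Module.Basis (Fin r) K F)
    (d : F) (hd : IsUnit d)
    (E : Type u) [CommRing E] [Algebra F E] [Algebra K E] [IsScalarTower K F E]
    [Module.Finite K E] [Algebra.Etale K E]
    (x : E) (hx : x ^ 2 = algebraMap F E d)
    (bE : Module.Basis (Fin 2) F E) (hbE0 : bE 0 = 1) (hbE1 : bE 1 = x)
    (σ : E →ₐ[K] E) (hσ : ∀ y, σ (σ y) = y) (hσx : σ x = -x)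
    (hσF : ∀ f : F, σ (algebraMap F E f) = algebraMap F E f) :
    (∃ c : K, c ≠ 0 ∧
      (Matrix.of fun p q : Fin r × Fin 2 =>
          Algebra.trace K E (bF.smulTower bE p * σ (bF.smulTower bE q))).det
        = (-1) ^ r * c ^ 2 *
          (Matrix.of fun p q : Fin r × Fin 2 =>
            Algebra.trace K E (bF.smulTower bE p * bF.smulTower bE q)).det) ∧
    (∀ a : F, IsUnit a → ∃ c : K, c ≠ 0 ∧
      (-1 : K) ^ r *
        (Matrix.of fun p q : Fin r × Fin 2 =>
          Algebra.trace K E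
            (algebraMap F E a * bF.smulTower bE p * σ (bF.smulTower bE q))).det
        = c ^ 2 *
          (Matrix.of fun p q : Fin r × Fin 2 =>
            Algebra.trace K E (bF.smulTower bE p * bF.smulTower bE q)).det) :=
  disc_trace_form_of_involution_general K F r bF E x bE hbE0 hbE1 σ hσx hσF
end

section
/- Let I = {1,…,m} be a finite index set, Ω a set, Σ₀ ⊆ Ω and Σ_i ⊆ Ω subsets for i ∈ I. Let P be the set of partitions (I₀, I₁) of I (ordered pairs with I₀ ∪ I₁ = I, I₀ ∩ I₁ = ∅) such that either the partition is trivial ((I,∅) or (∅,I)) or Σ₀ ∪ (⋂_{i∈I₀} Σ_i) ∪ (⋂_{j∈I₁} Σ_j) = Ω. Identify (I₀,I₁) with (I₁,I₀). Then the set of equivalence classes of P, with addition (I₀,I₁) + (I₀′,I₁′) = ((I₀∩I₀′) ∪ (I₁∩I₁′), (I₀∩I₁′) ∪ (I₁∩I₀′)), is a subgroup of the group ({0,1}^m)/⟨(1,…,1)⟩ under componentwise addition; in particular, it is closed under the sum operation. -/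
/-!
Fix `ω ∉ Sig0` and let `T = {i | ω ∉ Σᵢ}`. The point `ω` lies in `(⋂_{I₀} Σᵢ) ∪ (⋂_{I₁} Σⱼ)`
exactly when `T ⊆ I₀` or `T ⊆ I₁`, i.e. when the encoding vector `x` is constant on `T`.
Vectors constant on a fixed set form a subgroup, so `shaSet` is the intersection over
`ω ∉ Sig0` of such subgroups; it contains `(1,…,1)`, which is constant everywhere.
-/

/-- The combinatorial Tate–Shafarevich set `S ⊆ (ℤ/2)^m` attached to a family of subsets
`Σᵢ ⊆ Ω` and `Sig0 ⊆ Ω`: a vector `x` (encoding the partition `I₀ = {i | x i = 0}`,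
`I₁ = {i | x i = 1}`) belongs to `S` iff the partition is trivial or
`Sig0 ∪ (⋂_{i ∈ I₀} Σᵢ) ∪ (⋂_{j ∈ I₁} Σⱼ) = Ω`. -/
def shaSet {Ω : Type*} (m : ℕ) (Sig0 : Set Ω) (Sig : Fin m → Set Ω) :
    Set (Fin m → ZMod 2) :=
  {x | x = 0 ∨ x = (fun _ => 1) ∨
    Sig0 ∪ (⋂ i ∈ {i | x i = 0}, Sig i) ∪ (⋂ j ∈ {j | x j = 1}, Sig j) = Set.univ}

def constOnAddSubgroup {ι A : Type*} [AddGroup A] (s : Set ι) : AddSubgroup (ι → A) where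
  carrier := {x | ∀ i ∈ s, ∀ j ∈ s, x i = x j}
  zero_mem' := fun _ _ _ _ => rfl
  add_mem' hx hy i hi j hj := by
    simp only [Pi.add_apply, hx i hi j hj, hy i hi j hj]
  neg_mem' hx i hi j hj := by
    simp only [Pi.neg_apply, hx i hi j hj]

lemma mem_constOnAddSubgroup {ι A : Type*} [AddGroup A] {s : Set ι} {x : ι → A} :
    x ∈ constOnAddSubgroup s ↔ ∀ i ∈ s, ∀ j ∈ s, x i = x j :=
  Iff.rfl

lemma const_mem_constOnAddSubgroup {ι A : Type*} [AddGroup A] {s : Set ι} (a : A) :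
    (fun _ => a) ∈ constOnAddSubgroup s :=
  fun _ _ _ _ => rfl

lemma mem_iInter_zero_union_iInter_one_iff {ι Ω : Type*} (Sig : ι → Set Ω)
    (x : ι → ZMod 2) (ω : Ω) :
    ω ∈ (⋂ i ∈ {i | x i = 0}, Sig i) ∪ (⋂ j ∈ {j | x j = 1}, Sig j) ↔
      x ∈ constOnAddSubgroup {i | ω ∉ Sig i} := by
  have eq_one_of_ne_zero : ∀ a : ZMod 2, a ≠ 0 → a = 1 := by decide
  have eq_zero_of_ne_one : ∀ a : ZMod 2, a ≠ 1 → a = 0 := by decide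
  simp only [mem_constOnAddSubgroup, Set.mem_union, Set.mem_iInter₂, Set.mem_ofPred_eq]
  constructor
  · rintro (h | h) i hi j hj
    · rw [eq_one_of_ne_zero _ (mt (h i) hi), eq_one_of_ne_zero _ (mt (h j) hj)]
    · rw [eq_zero_of_ne_one _ (mt (h i) hi), eq_zero_of_ne_one _ (mt (h j) hj)]
  · intro h
    by_cases hzero : ∃ i, ω ∉ Sig i ∧ x i = 0
    · obtain ⟨i, hi, hi0⟩ := hzero
      refine Or.inr fun j hj1 => by_contra fun hj => ?_
      simp [← h i hi j hj, hi0] at hj1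
    · push Not at hzero
      exact Or.inl fun i hi0 => by_contra fun hi => hzero i hi hi0

lemma mem_shaSet_iff {Ω : Type*} {m : ℕ} {Sig0 : Set Ω} {Sig : Fin m → Set Ω}
    {x : Fin m → ZMod 2} :
    x ∈ shaSet m Sig0 Sig ↔ ∀ ω ∉ Sig0, x ∈ constOnAddSubgroup {i | ω ∉ Sig i} := by
  simp only [← mem_iInter_zero_union_iInter_one_iff, shaSet, Set.union_assoc,
    ← Set.compl_subset_iff_union, Set.subset_def, Set.mem_compl_iff, Set.mem_ofPred_eq]
  refine ⟨?_, fun hcover => Or.inr (Or.inr hcover)⟩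
  rintro (rfl | rfl | hcover) ω hω
  · exact (mem_iInter_zero_union_iInter_one_iff Sig _ ω).2 (const_mem_constOnAddSubgroup 0)
  · exact (mem_iInter_zero_union_iInter_one_iff Sig _ ω).2 (const_mem_constOnAddSubgroup 1)
  · exact hcover ω hω

/-- The set of (classes of) partitions `(I₀, I₁)` of `I = {1,…,m}` which are
trivial or satisfy `Sig0 ∪ (⋂_{i∈I₀} Σᵢ) ∪ (⋂_{j∈I₁} Σⱼ) = Ω`, with the addition
`(I₀,I₁) + (I₀′,I₁′) = ((I₀∩I₀′)∪(I₁∩I₁′), (I₀∩I₁′)∪(I₁∩I₀′))` (which corresponds to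
componentwise addition of the encoding vectors in `(ℤ/2)^m`), forms a subgroup of
`({0,1}^m)/⟨(1,…,1)⟩`: concretely, the set `S` of encoding vectors is a subgroup of
`(ℤ/2)^m` containing the all-ones vector `(1,…,1)`; in particular it is closed under sums. -/
theorem shaSet_is_subgroup {Ω : Type*} (m : ℕ) (Sig0 : Set Ω) (Sig : Fin m → Set Ω) :
    ∃ G : AddSubgroup (Fin m → ZMod 2),
      (G : Set (Fin m → ZMod 2)) = shaSet m Sig0 Sig ∧ (fun _ => (1 : ZMod 2)) ∈ G := by
  refine ⟨⨅ ω : (Sig0ᶜ : Set Ω), constOnAddSubgroup {i | ω.1 ∉ Sig i}, ?_,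
    AddSubgroup.mem_iInf.2 fun _ => const_mem_constOnAddSubgroup 1⟩
  ext x
  simp only [SetLike.mem_coe, AddSubgroup.mem_iInf, Subtype.forall, Set.mem_compl_iff,
    mem_shaSet_iff]
end

section
/- Let H₁ and H₂ be quaternion algebras over a field K of characteristic ≠ 2 with canonical (symplectic) involutions τ₁, τ₂, and let (A,τ) = (H₁ ⊗_K H₂, τ₁ ⊗ τ₂). Then every τ-skew element of A lies in H₁⁰ ⊗ 1 ⊕ 1 ⊗ H₂⁰ (where H_i⁰ denotes the pure quaternions, i.e. the τ_i-skew elements), and every τ-skew element whose square is central (lies in K) belongs to H₁⁰ ⊗ 1 or to 1 ⊗ H₂⁰. -/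
/-!
Write the quaternion conjugation as `σ = P - I`, where `P x = re x` and `I x = im x`, so that
`P + I = id`. Expanding bilinearly, `id - σ₁ ⊗ σ₂ = 2 (I₁ ⊗ P₂ + P₁ ⊗ I₂)`; for a skew `z` the left
side is `2z`, and `I₁ ⊗ P₂`, `P₁ ⊗ I₂` take values in `H₁⁰ ⊗ 1` and `1 ⊗ H₂⁰`.

If `z = x ⊗ 1 + 1 ⊗ y` with `x, y` pure, then `x², y² ∈ K` and `z² = x² + y² + 2 x ⊗ y`. Reading off
the `1 ⊗ 1`-coordinate (the functional `re ⊗ re`, which kills `x ⊗ y`) shows that a central `z²`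
forces `x ⊗ y = 0`, hence `x = 0` or `y = 0`.
-/

open scoped TensorProduct

/-- The canonical involution (quaternion conjugation) of a quaternion algebra, as a
`K`-linear map. -/
def quatStarLM (K : Type*) [Field K] (a b : K) :
    QuaternionAlgebra K a 0 b →ₗ[K] QuaternionAlgebra K a 0 b where
  toFun := star
  map_add' := star_add
  map_smul' r x := by simp [QuaternionAlgebra.star_smul]

open TensorProduct LinearMap

namespace TensorProduct

variable {R M N : Type*} [CommRing R] [AddCommGroup M] [Module R M] [AddCommGroup N] [Module R N]

theorem id_sub_map_sub_sub {P I : M →ₗ[R] M} {P' I' : N →ₗ[R] N} (h : P + I = LinearMap.id)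
    (h' : P' + I' = LinearMap.id) :
    LinearMap.id - map (P - I) (P' - I') = (2 : R) • (map I P' + map P I') := by
  rw [← map_id, ← h, ← h']
  simp only [← mapBilinear_apply, map_add, map_sub, LinearMap.add_apply, LinearMap.sub_apply]
  module

theorem eq_zero_or_eq_zero_of_tmul_eq_zero {K V W : Type*} [Field K] [AddCommGroup V] [Module K V]
    [AddCommGroup W] [Module K W] {x : V} {y : W} (h : x ⊗ₜ[K] y = 0) : x = 0 ∨ y = 0 := by
  refine or_iff_not_imp_left.2 fun hx => ?_
  obtain ⟨f, hf⟩ := Module.Projective.exists_dual_eq_one K hx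
  simpa [hf] using congr(TensorProduct.lid K W (rTensor W f $h))

section Algebra

variable {K A B : Type*} [CommSemiring K] [Semiring A] [Algebra K A] [Semiring B] [Algebra K B]

theorem map_comp_linearMap_mem_map_includeLeft (f : A →ₗ[K] A) (g : B →ₗ[K] K) (w : A ⊗[K] B) :
    map f (Algebra.linearMap K B ∘ₗ g) w ∈
      (range f).map (Algebra.TensorProduct.includeLeft (S := K)).toLinearMap := by
  induction w using TensorProduct.induction_on with
  | zero => simp
  | tmul x y =>
    refine ⟨g y • f x, ⟨g y • x, map_smul f _ _⟩, ?_⟩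
    simp [Algebra.algebraMap_eq_smul_one, smul_tmul']
  | add u v hu hv => simpa only [map_add] using add_mem hu hv

theorem map_linearMap_comp_mem_map_includeRight (g : A →ₗ[K] K) (f : B →ₗ[K] B) (w : A ⊗[K] B) :
    map (Algebra.linearMap K A ∘ₗ g) f w ∈
      (range f).map Algebra.TensorProduct.includeRight.toLinearMap := by
  induction w using TensorProduct.induction_on with
  | zero => simp
  | tmul x y =>
    refine ⟨g x • f y, ⟨g x • y, map_smul f _ _⟩, ?_⟩
    simp [Algebra.algebraMap_eq_smul_one, smul_tmul']
  | add u v hu hv => simpa only [map_add] using add_mem hu hv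

end Algebra

end TensorProduct

namespace Algebra.TensorProduct

variable {K A B : Type*} [CommSemiring K] [Semiring A] [Algebra K A] [Semiring B] [Algebra K B]

theorem tmul_one_add_one_tmul_mul_self (x : A) (y : B) :
    (x ⊗ₜ[K] 1 + 1 ⊗ₜ y) * (x ⊗ₜ 1 + 1 ⊗ₜ y) =
      (x * x) ⊗ₜ 1 + 1 ⊗ₜ (y * y) + (2 : K) • x ⊗ₜ y := by
  simp only [add_mul, mul_add, tmul_mul_tmul, one_mul, mul_one, two_smul]
  abel

end Algebra.TensorProduct

namespace QuaternionAlgebra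

section CommRing

variable {R : Type*} [CommRing R] (c₁ c₂ c₃ : R)

def imₗ : QuaternionAlgebra R c₁ c₂ c₃ →ₗ[R] QuaternionAlgebra R c₁ c₂ c₃ where
  toFun := im
  map_add' x y := im_add x y
  map_smul' r x := im_smul x r

@[simp] theorem imₗ_apply (x : QuaternionAlgebra R c₁ c₂ c₃) : imₗ c₁ c₂ c₃ x = x.im := rfl

theorem linearMap_comp_reₗ_add_imₗ :
    Algebra.linearMap R _ ∘ₗ reₗ c₁ c₂ c₃ + imₗ c₁ c₂ c₃ = LinearMap.id :=
  LinearMap.ext fun x => re_add_im x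

variable {c₁ c₂ c₃}

theorem mul_self_eq_coe_of_star_eq_neg {x : QuaternionAlgebra R c₁ c₂ c₃} (hx : star x = -x) :
    x * x = ↑(-(x * star x).re) := by
  rw [coe_neg, ← mul_star_eq_coe, hx, mul_neg, neg_neg]

theorem re_eq_zero_of_star_eq_neg [NoZeroDivisors R] (h2 : (2 : R) ≠ 0)
    {x : QuaternionAlgebra R c₁ 0 c₃} (hx : star x = -x) : x.re = 0 := by
  have h := congr(re $hx)
  simp only [re_star, zero_mul, add_zero, re_neg] at h
  exact (mul_eq_zero.1 (by linear_combination h : 2 * x.re = 0)).resolve_left h2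

end CommRing

variable {K : Type*} [Field K] {a b : K}

@[simp] theorem quatStarLM_apply (x : QuaternionAlgebra K a 0 b) : quatStarLM K a b x = star x :=
  rfl

theorem quatStarLM_eq : quatStarLM K a b = Algebra.linearMap K _ ∘ₗ reₗ a 0 b - imₗ a 0 b := by
  ext x <;> simp

theorem star_eq_neg_of_mem_ker {x : QuaternionAlgebra K a 0 b}
    (hx : x ∈ ker (quatStarLM K a b + LinearMap.id)) : star x = -x :=
  eq_neg_of_add_eq_zero_left hx

theorem range_imₗ_le_ker_quatStarLM_add_id :
    range (imₗ a 0 b) ≤ ker (quatStarLM K a b + LinearMap.id) := by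
  rintro _ ⟨x, rfl⟩
  simp

end QuaternionAlgebra

section

open QuaternionAlgebra Algebra.TensorProduct

variable {K : Type*} [Field K] {a₁ b₁ a₂ b₂ : K}

theorem mem_sup_of_map_quatStarLM_eq_neg (h2 : (2 : K) ≠ 0)
    {z : QuaternionAlgebra K a₁ 0 b₁ ⊗[K] QuaternionAlgebra K a₂ 0 b₂}
    (hz : TensorProduct.map (quatStarLM K a₁ b₁) (quatStarLM K a₂ b₂) z = -z) :
    z ∈ (ker (quatStarLM K a₁ b₁ + LinearMap.id)).map (includeLeft (S := K)).toLinearMap ⊔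
      (ker (quatStarLM K a₂ b₂ + LinearMap.id)).map includeRight.toLinearMap := by
  have key := congr($(id_sub_map_sub_sub (linearMap_comp_reₗ_add_imₗ a₁ 0 b₁)
    (linearMap_comp_reₗ_add_imₗ a₂ 0 b₂)) z)
  rw [← quatStarLM_eq, ← quatStarLM_eq, LinearMap.sub_apply, hz, LinearMap.id_apply,
    sub_neg_eq_add, ← two_smul K, LinearMap.smul_apply] at key
  rw [smul_right_injective _ h2 key, LinearMap.add_apply]
  exact add_mem
    (Submodule.mem_sup_left (Submodule.map_mono range_imₗ_le_ker_quatStarLM_add_id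
      (map_comp_linearMap_mem_map_includeLeft _ _ z)))
    (Submodule.mem_sup_right (Submodule.map_mono range_imₗ_le_ker_quatStarLM_add_id
      (map_linearMap_comp_mem_map_includeRight _ _ z)))

theorem eq_zero_or_eq_zero_of_tmul_one_add_one_tmul_mul_self_eq_algebraMap (h2 : (2 : K) ≠ 0)
    {x : QuaternionAlgebra K a₁ 0 b₁} {y : QuaternionAlgebra K a₂ 0 b₂}
    (hx : star x = -x) (hy : star y = -y) {c : K}
    (h : (x ⊗ₜ[K] 1 + 1 ⊗ₜ y) * (x ⊗ₜ 1 + 1 ⊗ₜ y) = algebraMap K _ c) : x = 0 ∨ y = 0 := by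
  rw [tmul_one_add_one_tmul_mul_self, mul_self_eq_coe_of_star_eq_neg hx,
    mul_self_eq_coe_of_star_eq_neg hy] at h
  set r := -(x * star x).re
  set s := -(y * star y).re
  have hc : r + s = c := by
    simpa [re_eq_zero_of_star_eq_neg h2 hx, Algebra.TensorProduct.algebraMap_apply] using
      congr(TensorProduct.lift ((LinearMap.mul K K).compl₁₂ (reₗ a₁ 0 b₁) (reₗ a₂ 0 b₂)) $h)
  have hxy : (2 : K) • x ⊗ₜ[K] y = 0 := by
    rw [← hc, map_add, Algebra.TensorProduct.algebraMap_apply, algebraMap_apply', coe_algebraMap]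
      at h
    simpa using h
  exact eq_zero_or_eq_zero_of_tmul_eq_zero ((smul_eq_zero.1 hxy).resolve_left h2)

end

theorem skew_of_tensor_of_quaternion_involutions_general
    (K : Type) [Field K] (h2 : (2 : K) ≠ 0)
    (a₁ b₁ a₂ b₂ : K) :
    ∀ z : QuaternionAlgebra K a₁ 0 b₁ ⊗[K] QuaternionAlgebra K a₂ 0 b₂,
      TensorProduct.map (quatStarLM K a₁ b₁) (quatStarLM K a₂ b₂) z = -z →
      (z ∈ (LinearMap.ker (quatStarLM K a₁ b₁ + LinearMap.id)).map
              (Algebra.TensorProduct.includeLeft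
                (R := K) (A := QuaternionAlgebra K a₁ 0 b₁)
                (B := QuaternionAlgebra K a₂ 0 b₂) (S := K)).toLinearMap ⊔
            (LinearMap.ker (quatStarLM K a₂ b₂ + LinearMap.id)).map
              (Algebra.TensorProduct.includeRight
                (R := K) (A := QuaternionAlgebra K a₁ 0 b₁)
                (B := QuaternionAlgebra K a₂ 0 b₂)).toLinearMap) ∧
      ((∃ c : K, z * z = algebraMap K _ c) →
        z ∈ (LinearMap.ker (quatStarLM K a₁ b₁ + LinearMap.id)).map
              (Algebra.TensorProduct.includeLeft
                (R := K) (A := QuaternionAlgebra K a₁ 0 b₁)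
                (B := QuaternionAlgebra K a₂ 0 b₂) (S := K)).toLinearMap ∨
        z ∈ (LinearMap.ker (quatStarLM K a₂ b₂ + LinearMap.id)).map
              (Algebra.TensorProduct.includeRight
                (R := K) (A := QuaternionAlgebra K a₁ 0 b₁)
                (B := QuaternionAlgebra K a₂ 0 b₂)).toLinearMap) := by
  intro z hz
  have hsup := mem_sup_of_map_quatStarLM_eq_neg h2 hz
  refine ⟨hsup, fun ⟨c, hc⟩ => ?_⟩
  obtain ⟨_, ⟨x, hx, rfl⟩, _, ⟨y, hy, rfl⟩, rfl⟩ := Submodule.mem_sup.1 hsup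
  rcases eq_zero_or_eq_zero_of_tmul_one_add_one_tmul_mul_self_eq_algebraMap h2
    (QuaternionAlgebra.star_eq_neg_of_mem_ker hx) (QuaternionAlgebra.star_eq_neg_of_mem_ker hy) hc
    with rfl | rfl
  · exact Or.inr ⟨y, hy, by simp⟩
  · exact Or.inl ⟨x, hx, by simp⟩

/-- Let `H₁ = (a₁,b₁)_K` and `H₂ = (a₂,b₂)_K` be quaternion algebras over a
field `K` of characteristic `≠ 2` with canonical involutions `τ₁, τ₂`, and let
`τ = τ₁ ⊗ τ₂` on `A = H₁ ⊗_K H₂`.  Then every `τ`-skew element of `A` lies in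
`H₁⁰ ⊗ 1 ⊕ 1 ⊗ H₂⁰` (where `Hᵢ⁰` is the space of pure quaternions, i.e. `τᵢ`-skew elements),
and every `τ`-skew element whose square is central (lies in `K`) belongs to `H₁⁰ ⊗ 1` or to
`1 ⊗ H₂⁰`. -/
theorem skew_of_tensor_of_quaternion_involutions
    (K : Type) [Field K] (h2 : (2 : K) ≠ 0)
    (a₁ b₁ a₂ b₂ : K) (ha₁ : a₁ ≠ 0) (hb₁ : b₁ ≠ 0) (ha₂ : a₂ ≠ 0) (hb₂ : b₂ ≠ 0) :
    ∀ z : QuaternionAlgebra K a₁ 0 b₁ ⊗[K] QuaternionAlgebra K a₂ 0 b₂,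
      TensorProduct.map (quatStarLM K a₁ b₁) (quatStarLM K a₂ b₂) z = -z →
      (z ∈ (LinearMap.ker (quatStarLM K a₁ b₁ + LinearMap.id)).map
              (Algebra.TensorProduct.includeLeft
                (R := K) (A := QuaternionAlgebra K a₁ 0 b₁)
                (B := QuaternionAlgebra K a₂ 0 b₂) (S := K)).toLinearMap ⊔
            (LinearMap.ker (quatStarLM K a₂ b₂ + LinearMap.id)).map
              (Algebra.TensorProduct.includeRight
                (R := K) (A := QuaternionAlgebra K a₁ 0 b₁)
                (B := QuaternionAlgebra K a₂ 0 b₂)).toLinearMap) ∧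
      ((∃ c : K, z * z = algebraMap K _ c) →
        z ∈ (LinearMap.ker (quatStarLM K a₁ b₁ + LinearMap.id)).map
              (Algebra.TensorProduct.includeLeft
                (R := K) (A := QuaternionAlgebra K a₁ 0 b₁)
                (B := QuaternionAlgebra K a₂ 0 b₂) (S := K)).toLinearMap ∨
        z ∈ (LinearMap.ker (quatStarLM K a₂ b₂ + LinearMap.id)).map
              (Algebra.TensorProduct.includeRight
                (R := K) (A := QuaternionAlgebra K a₁ 0 b₁)
                (B := QuaternionAlgebra K a₂ 0 b₂)).toLinearMap) :=
  skew_of_tensor_of_quaternion_involutions_general K h2 a₁ b₁ a₂ b₂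
end

section
/- Let K be a field of characteristic ≠ 2, a, b ∈ K^× with a not a square, b not a square, and suppose H₁ and H₂ are quaternion division algebras over K such that K(√b) splits neither H₁ nor H₂, while K(√a) splits both. Then there is no embedding of algebras with involution of (E,σ) into (H₁⊗H₂, τ₁⊗τ₂), where E = K(√a)⊗K(√b), σ is the tensor product of the nontrivial automorphisms, and τ_i are the canonical involutions. -/
open scoped TensorProduct

/-!
The image `x = f (1 ⊗ √b)` is skew for `τ₁ ⊗ τ₂` and `x² = b`. Skew elements of `H₁ ⊗ H₂` are
`u ⊗ 1 + 1 ⊗ v` with `u, v` pure, and then `x² = u² + v² + 2 (u ⊗ v)` with `u², v² ∈ K`, so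
`u ⊗ v = 0`: `x` lies in `H₁` or in `H₂`. But a pure quaternion `u` with `u² = b` in a quaternion
division algebra `H` is the first vector of a quaternion basis `u, w`, so `H ≅ (b, w²)_K`, and this
algebra is split by `K(√b)`.
-/

open scoped Quaternion

theorem TensorProduct.eq_zero_or_eq_zero_of_tmul_eq_zero_s15 {K V W : Type*} [Field K]
    [AddCommGroup V] [Module K V] [AddCommGroup W] [Module K W] {v : V} {w : W}
    (h : v ⊗ₜ[K] w = 0) : v = 0 ∨ w = 0 := by
  refine or_iff_not_imp_left.mpr fun hv => ?_
  obtain ⟨φ, hφ⟩ := Module.Projective.exists_dual_eq_one K hv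
  simpa [hφ] using congrArg (TensorProduct.lid K W ∘ φ.rTensor W) h

theorem AlgEquiv.apply_eq_neg_of_sq_eq_algebraMap {K L : Type*} [Field K] [Field L]
    [Algebra K L] (hL : Module.finrank K L = 2) {σ : L ≃ₐ[K] L} (hσ : σ ≠ AlgEquiv.refl)
    {β : L} {b : K} (hβ : β ^ 2 = algebraMap K L b) (hβK : β ∉ Set.range (algebraMap K L)) :
    σ β = -β := by
  have hσβ : σ β ^ 2 = β ^ 2 := by rw [← map_pow, hβ, AlgEquiv.commutes]
  have hsq : (σ β - β) * (σ β + β) = 0 := by linear_combination hσβ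
  refine eq_neg_of_add_eq_zero_left ((mul_eq_zero.mp hsq).resolve_left fun hfix => hσ ?_)
  have hli : LinearIndependent K ![(1 : L), β] :=
    (LinearIndependent.pair_iff' one_ne_zero).mpr fun t ht =>
      hβK ⟨t, by rw [Algebra.algebraMap_eq_smul_one, ht]⟩
  have hσ_id := LinearMap.ext_on_range (hli.span_eq_top_of_card_eq_finrank (by simp [hL]))
    (f := σ.toLinearMap) (g := LinearMap.id) fun i => by
      fin_cases i
      · simp
      · simpa using sub_eq_zero.mp hfix
  exact AlgEquiv.ext (LinearMap.congr_fun hσ_id)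

namespace QuaternionAlgebra

variable {K : Type*} [Field K] {c₁ c₃ d₁ d₃ : K}

theorem star_eq_coe_sub (a : ℍ[K,c₁,0,c₃]) : star a = ↑(2 * a.re) - a := by
  simpa using star_eq_two_re_sub a

theorem mul_self_eq_algebraMap_of_re_eq_zero {a : ℍ[K,c₁,0,c₃]} (ha : a.re = 0) :
    a * a = algebraMap K _ (a * a).re := by
  have h := mul_star_eq_coe a
  rw [coe_algebraMap]
  rwa [star_eq_coe_sub, ha, mul_zero, coe_zero, zero_sub, mul_neg, re_neg, coe_neg,
    neg_inj] at h

theorem exists_ne_zero_mul_eq_neg_mul (h2 : (2 : K) ≠ 0) (hc₁ : c₁ ≠ 0) {u : ℍ[K,c₁,0,c₃]}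
    (hu : u ≠ 0) (hre : u.re = 0) :
    ∃ w : ℍ[K,c₁,0,c₃], w ≠ 0 ∧ w.re = 0 ∧ u * w = -(w * u) := by
  obtain ⟨v, hv⟩ : ∃ v : ℍ[K,c₁,0,c₃], u * v - v * u ≠ 0 := by
    by_contra! h
    have hI := congrArg imK (h ⟨0, 0, 1, 0⟩)
    have hJ := congrArg imK (h ⟨0, 1, 0, 0⟩)
    have hK := congrArg imJ (h ⟨0, 1, 0, 0⟩)
    simp only [imK_sub, imJ_sub, imK_mul, imJ_mul, hre, imK_zero, imJ_zero] at hI hJ hK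
    replace hI : 2 * u.imI = 0 := by linear_combination hI
    replace hJ : 2 * u.imJ = 0 := by linear_combination -hJ
    replace hK : 2 * c₁ * u.imK = 0 := by linear_combination -hK
    exact hu (QuaternionAlgebra.ext hre (by simpa [h2] using hI) (by simpa [h2] using hJ)
      (by simpa [h2, hc₁] using hK))
  -- `u * u` is central, so every commutator `u * v - v * u` anticommutes with `u`
  have hcomm : Commute (u * u) v := by
    rw [mul_self_eq_algebraMap_of_re_eq_zero hre]; exact Algebra.commute_algebraMap_left _ v
  refine ⟨u * v - v * u, hv, by simp; ring, ?_⟩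
  simp only [mul_sub, sub_mul, ← mul_assoc, hcomm.eq]
  abel

theorem Basis.liftHom_injective {A : Type*} [Ring A] [Algebra K A] (q : Basis A c₁ 0 c₃)
    (h2 : (2 : K) ≠ 0) (hc₁ : c₁ ≠ 0) (hj : IsUnit q.j) (hi : LinearIndependent K ![1, q.i]) :
    Function.Injective q.liftHom := by
  have hii : q.i * q.i = c₁ • 1 := by simp [q.i_mul_i]
  have hji : q.j * q.i = -(q.i * q.j) := by simp [q.j_mul_i, q.i_mul_j]
  rw [injective_iff_map_eq_zero]
  intro x hx
  set p : A := x.re • 1 + x.imI • q.i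
  set r : A := x.imJ • 1 + x.imK • q.i
  have hsum : p + r * q.j = 0 := by
    rw [← hx]
    simp only [p, r, Basis.liftHom_apply, Basis.lift, Algebra.algebraMap_eq_smul_one, add_mul,
      smul_mul_assoc, one_mul, q.i_mul_j]
    abel
  have hconj : q.i * (p + r * q.j) * q.i = c₁ • (p - r * q.j) := by
    simp only [p, r, mul_add, add_mul, mul_smul_comm, smul_mul_assoc, mul_one, one_mul,
      mul_assoc, hji, hii]
    simp only [← mul_assoc, hii, mul_neg, mul_smul_comm, smul_mul_assoc, one_mul, smul_sub,
      smul_add]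
    module
  have hdiff : p - r * q.j = 0 := by simpa [hsum, hc₁] using hconj.symm
  have hp : p = 0 := by
    have : (2 : K) • p = 0 := by rw [two_smul]; linear_combination (norm := module) hsum + hdiff
    simpa [h2] using this
  have hr : r = 0 := by
    rw [hp, zero_add] at hsum
    exact hj.mul_left_eq_zero.mp hsum
  obtain ⟨hre, himI⟩ := LinearIndependent.pair_iff.mp hi _ _ hp
  obtain ⟨himJ, himK⟩ := LinearIndependent.pair_iff.mp hi _ _ hr
  ext <;> assumption

theorem exists_algEquiv_of_mul_self_eq_algebraMap (h2 : (2 : K) ≠ 0) (hc₁ : c₁ ≠ 0)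
    (hdiv : ∀ x : ℍ[K,c₁,0,c₃], x ≠ 0 → IsUnit x) {u : ℍ[K,c₁,0,c₃]} (hre : u.re = 0)
    {b : K} (hb : b ≠ 0) (hu : u * u = algebraMap K _ b) :
    ∃ c ≠ 0, Nonempty (ℍ[K,b,0,c] ≃ₐ[K] ℍ[K,c₁,0,c₃]) := by
  have hu0 : u ≠ 0 := by
    rintro rfl
    exact hb ((algebraMap K ℍ[K,c₁,0,c₃]).injective (by rw [← hu, zero_mul, map_zero]))
  obtain ⟨w, hw0, hwre, huw⟩ := exists_ne_zero_mul_eq_neg_mul h2 hc₁ hu0 hre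
  have hww := mul_self_eq_algebraMap_of_re_eq_zero hwre
  have hc : (w * w).re ≠ 0 := fun h => hw0 <| (hdiv w hw0).mul_left_eq_zero.mp <| by
    rw [hww, h, map_zero]
  let q : Basis ℍ[K,c₁,0,c₃] b 0 (w * w).re :=
    { i := u, j := w, k := u * w
      i_mul_i := by rw [hu, Algebra.algebraMap_eq_smul_one, zero_smul, add_zero]
      j_mul_j := by rw [← Algebra.algebraMap_eq_smul_one, ← hww]
      i_mul_j := rfl
      j_mul_i := by rw [huw, zero_smul, zero_sub, neg_neg] }
  have hli : LinearIndependent K ![1, q.i] :=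
    (LinearIndependent.pair_iff' one_ne_zero).mpr fun t ht => hu0 <| by
      have ht' : t • (1 : ℍ[K,c₁,0,c₃]) = u := ht
      rw [← ht', show t = 0 by simpa [hre] using congrArg re ht', zero_smul]
  have hinj := q.liftHom_injective h2 hb (hdiv w hw0) hli
  have hsurj := (LinearMap.injective_iff_surjective_of_finrank_eq_finrank
    (f := q.liftHom.toLinearMap) (by simp [finrank_eq_four])).mp hinj
  exact ⟨_, hc, ⟨AlgEquiv.ofBijective q.liftHom ⟨hinj, hsurj⟩⟩⟩

theorem nonempty_tensor_algEquiv_matrix_of_sq_eq {L : Type*} [Field L] [Algebra K L]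
    {b c : K} (h2 : (2 : K) ≠ 0) (hc : c ≠ 0) {β : L} (hβ0 : β ≠ 0)
    (hβ : β ^ 2 = algebraMap K L b) :
    Nonempty (L ⊗[K] ℍ[K,b,0,c] ≃ₐ[L] Matrix (Fin 2) (Fin 2) L) := by
  have hββ : β * β = algebraMap K L b := by rw [← sq, hβ]
  let γ := algebraMap K L c
  have hγ : γ ≠ 0 := (map_ne_zero _).mpr hc
  have h2L : (2 : L) ≠ 0 := by
    rw [← map_ofNat (algebraMap K L) 2]; exact (map_ne_zero _).mpr h2
  let q : Basis (Matrix (Fin 2) (Fin 2) L) b 0 c :=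
    { i := !![β, 0; 0, -β]
      j := !![0, 1; γ, 0]
      k := !![0, β; -(γ * β), 0]
      i_mul_i := by
        ext i j
        fin_cases i <;> fin_cases j <;>
          simp [Algebra.smul_def, Matrix.algebraMap_matrix_apply, hββ]
      j_mul_j := by
        ext i j; fin_cases i <;> fin_cases j <;> simp [Algebra.smul_def, γ]
      i_mul_j := by simp [mul_comm]
      j_mul_i := by simp }
  let Θ : L ⊗[K] ℍ[K,b,0,c] →ₐ[L] Matrix (Fin 2) (Fin 2) L :=
    Algebra.TensorProduct.lift (Algebra.ofId L _) q.liftHom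
      fun x y => Algebra.commute_algebraMap_left x (q.liftHom y)
  have hΘ (s : L) (x : ℍ[K,b,0,c]) : Θ (s ⊗ₜ x) = s • q.liftHom x :=
    (Algebra.TensorProduct.lift_tmul _ _ _ s x).trans (Algebra.smul_def s _).symm
  have hsurj : Function.Surjective Θ := by
    intro N
    refine ⟨((N 0 0 + N 1 1) / 2) ⊗ₜ 1 + ((N 0 0 - N 1 1) / (2 * β)) ⊗ₜ ⟨0, 1, 0, 0⟩
      + ((N 0 1 + N 1 0 / γ) / 2) ⊗ₜ ⟨0, 0, 1, 0⟩
      + ((N 0 1 - N 1 0 / γ) / (2 * β)) ⊗ₜ ⟨0, 0, 0, 1⟩, ?_⟩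
    simp only [map_add, hΘ, Basis.liftHom_apply, Basis.lift, q]
    ext i j
    fin_cases i <;> fin_cases j <;> (simp; field_simp; ring)
  have hinj : Function.Injective Θ :=
    (LinearMap.injective_iff_surjective_of_finrank_eq_finrank (f := Θ.toLinearMap)
      (by simp [Module.finrank_matrix, finrank_eq_four])).mpr hsurj
  exact ⟨AlgEquiv.ofBijective Θ ⟨hinj, hsurj⟩⟩

theorem nonempty_tensor_algEquiv_matrix_of_mul_self_eq_algebraMap {L : Type*} [Field L]
    [Algebra K L] (h2 : (2 : K) ≠ 0) (hc₁ : c₁ ≠ 0)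
    (hdiv : ∀ x : ℍ[K,c₁,0,c₃], x ≠ 0 → IsUnit x) {u : ℍ[K,c₁,0,c₃]} (hre : u.re = 0)
    {b : K} (hb : b ≠ 0) (hu : u * u = algebraMap K _ b) {β : L}
    (hβ : β ^ 2 = algebraMap K L b) :
    Nonempty (L ⊗[K] ℍ[K,c₁,0,c₃] ≃ₐ[L] Matrix (Fin 2) (Fin 2) L) := by
  obtain ⟨c, hc, ⟨e⟩⟩ := exists_algEquiv_of_mul_self_eq_algebraMap h2 hc₁ hdiv hre hb hu
  have hβ0 : β ≠ 0 := by
    rintro rfl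
    exact hb ((algebraMap K L).injective (by rw [← hβ, map_zero, zero_pow two_ne_zero]))
  obtain ⟨φ⟩ := nonempty_tensor_algEquiv_matrix_of_sq_eq h2 hc hβ0 hβ
  exact ⟨(Algebra.TensorProduct.congr AlgEquiv.refl e.symm).trans φ⟩

theorem sub_map_star_eq (t : ℍ[K,c₁,0,c₃] ⊗[K] ℍ[K,d₁,0,d₃]) :
    t - TensorProduct.map (quatStarLM K c₁ c₃) (quatStarLM K d₁ d₃) t =
      (2 : K) • ((TensorProduct.rid K _ ((reₗ d₁ 0 d₃).lTensor _ t)).im ⊗ₜ 1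
        + 1 ⊗ₜ (TensorProduct.lid K _ ((reₗ c₁ 0 c₃).rTensor _ t)).im) := by
  induction t using TensorProduct.induction_on with
  | zero => simp
  | add s t hs ht =>
    simp only [map_add, im_add, TensorProduct.add_tmul, TensorProduct.tmul_add, smul_add] at hs ht ⊢
    linear_combination (norm := module) hs + ht
  | tmul x y =>
    have hx : x.im = x - x.re • 1 := by rw [← coe_mul_eq_smul, mul_one, ← re_add_im x]; simp
    have hy : y.im = y - y.re • 1 := by rw [← coe_mul_eq_smul, mul_one, ← re_add_im y]; simp
    have hsx : star x = (2 * x.re) • 1 - x := by rw [star_eq_coe_sub, ← coe_mul_eq_smul, mul_one]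
    have hsy : star y = (2 * y.re) • 1 - y := by rw [star_eq_coe_sub, ← coe_mul_eq_smul, mul_one]
    simp only [TensorProduct.map_tmul, LinearMap.lTensor_tmul, LinearMap.rTensor_tmul,
      quatStarLM, LinearMap.coe_mk, AddHom.coe_mk, reₗ_apply, TensorProduct.rid_tmul,
      TensorProduct.lid_tmul, im_smul]
    simp only [hx, hy, hsx, hsy, TensorProduct.tmul_sub, TensorProduct.sub_tmul,
      TensorProduct.tmul_smul, ← TensorProduct.smul_tmul']
    module

theorem exists_eq_tmul_one_add_one_tmul_of_map_star_eq_neg (h2 : (2 : K) ≠ 0)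
    {t : ℍ[K,c₁,0,c₃] ⊗[K] ℍ[K,d₁,0,d₃]}
    (ht : TensorProduct.map (quatStarLM K c₁ c₃) (quatStarLM K d₁ d₃) t = -t) :
    ∃ (u : ℍ[K,c₁,0,c₃]) (v : ℍ[K,d₁,0,d₃]), u.re = 0 ∧ v.re = 0 ∧ t = u ⊗ₜ 1 + 1 ⊗ₜ v :=
  ⟨_, _, re_im _, re_im _, smul_right_injective _ h2 <| by
    beta_reduce; rw [two_smul K t, ← sub_neg_eq_add, ← ht, sub_map_star_eq]⟩

theorem tmul_one_add_one_tmul_mul_self_eq_algebraMap_iff (h2 : (2 : K) ≠ 0)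
    {u : ℍ[K,c₁,0,c₃]} {v : ℍ[K,d₁,0,d₃]} (hu : u.re = 0) (hv : v.re = 0) {b : K} :
    (u ⊗ₜ[K] 1 + 1 ⊗ₜ v) * (u ⊗ₜ 1 + 1 ⊗ₜ v) = algebraMap K _ b ↔
      u = 0 ∧ v * v = algebraMap K _ b ∨ v = 0 ∧ u * u = algebraMap K _ b := by
  obtain ⟨cu, hu2⟩ : ∃ c, u * u = algebraMap K _ c := ⟨_, mul_self_eq_algebraMap_of_re_eq_zero hu⟩
  obtain ⟨cv, hv2⟩ : ∃ c, v * v = algebraMap K _ c := ⟨_, mul_self_eq_algebraMap_of_re_eq_zero hv⟩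
  have hexp : (u ⊗ₜ[K] 1 + 1 ⊗ₜ v) * (u ⊗ₜ 1 + 1 ⊗ₜ v) =
      algebraMap K _ (cu + cv) + (2 : K) • (u ⊗ₜ v) := by
    simp only [add_mul, mul_add, Algebra.TensorProduct.tmul_mul_tmul, one_mul, mul_one]
    rw [hu2, hv2, ← Algebra.TensorProduct.algebraMap_apply,
      ← Algebra.TensorProduct.algebraMap_apply', map_add, two_smul]
    abel
  constructor
  · intro h
    rw [hexp] at h
    -- apply `re ⊗ re`, which kills `u ⊗ v`
    have hb : cu + cv = b := by
      simpa [hu, hv, Algebra.TensorProduct.algebraMap_apply] using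
        congrArg (TensorProduct.lid K K ∘ TensorProduct.map (reₗ c₁ 0 c₃) (reₗ d₁ 0 d₃)) h
    rw [hb, add_eq_left, smul_eq_zero] at h
    rcases TensorProduct.eq_zero_or_eq_zero_of_tmul_eq_zero_s15 (h.resolve_left h2) with rfl | rfl
    · have : cu = 0 := (algebraMap K _).injective (by rw [← hu2, zero_mul, map_zero])
      exact .inl ⟨rfl, by rw [hv2, ← hb, this, zero_add]⟩
    · have : cv = 0 := (algebraMap K _).injective (by rw [← hv2, zero_mul, map_zero])
      exact .inr ⟨rfl, by rw [hu2, ← hb, this, add_zero]⟩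
  · rintro (⟨rfl, h⟩ | ⟨rfl, h⟩)
    · rw [TensorProduct.zero_tmul, zero_add, Algebra.TensorProduct.tmul_mul_tmul, one_mul, h,
        Algebra.TensorProduct.algebraMap_apply']
    · rw [TensorProduct.tmul_zero, add_zero, Algebra.TensorProduct.tmul_mul_tmul, one_mul, h,
        Algebra.TensorProduct.algebraMap_apply]

end QuaternionAlgebra

theorem no_involution_embedding_into_quaternion_tensor_general
    (K : Type) [Field K] (h2 : (2 : K) ≠ 0)
    (b : K) (hsb : ¬ IsSquare b)
    (La : Type) [Field La] [Algebra K La]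
    (sa : La ≃ₐ[K] La)
    (Lb : Type) [Field Lb] [Algebra K Lb] (β : Lb) (hβ : β ^ 2 = algebraMap K Lb b)
    (hLb : Module.finrank K Lb = 2)
    (sb : Lb ≃ₐ[K] Lb) (hsb' : sb ≠ AlgEquiv.refl)
    (a₁ b₁ a₂ b₂ : K) (ha₁ : a₁ ≠ 0) (ha₂ : a₂ ≠ 0)
    (hdiv₁ : ∀ x : QuaternionAlgebra K a₁ 0 b₁, x ≠ 0 → IsUnit x)
    (hdiv₂ : ∀ x : QuaternionAlgebra K a₂ 0 b₂, x ≠ 0 → IsUnit x)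
    -- `K(√b)` splits neither `H₁` nor `H₂` :
    (hbn₁ : ¬ Nonempty
      ((Lb ⊗[K] QuaternionAlgebra K a₁ 0 b₁) ≃ₐ[Lb] Matrix (Fin 2) (Fin 2) Lb))
    (hbn₂ : ¬ Nonempty
      ((Lb ⊗[K] QuaternionAlgebra K a₂ 0 b₂) ≃ₐ[Lb] Matrix (Fin 2) (Fin 2) Lb)) :
    ¬ ∃ f : (La ⊗[K] Lb) →ₐ[K]
        (QuaternionAlgebra K a₁ 0 b₁ ⊗[K] QuaternionAlgebra K a₂ 0 b₂),
      Function.Injective f ∧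
      ∀ e : La ⊗[K] Lb,
        TensorProduct.map (quatStarLM K a₁ b₁) (quatStarLM K a₂ b₂) (f e)
          = f (Algebra.TensorProduct.map sa.toAlgHom sb.toAlgHom e) := by
  rintro ⟨f, -, hf⟩
  have hb : b ≠ 0 := by rintro rfl; exact hsb ⟨0, (mul_zero 0).symm⟩
  have hβK : β ∉ Set.range (algebraMap K Lb) := by
    rintro ⟨t, rfl⟩
    exact hsb ⟨t, (algebraMap K Lb).injective (by rw [← hβ, map_mul, sq])⟩
  set x := f (1 ⊗ₜ β)
  have hskew : TensorProduct.map (quatStarLM K a₁ b₁) (quatStarLM K a₂ b₂) x = -x := by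
    simpa [AlgEquiv.apply_eq_neg_of_sq_eq_algebraMap hLb hsb' hβ hβK, TensorProduct.tmul_neg]
      using hf (1 ⊗ₜ β)
  have hsq : x * x = algebraMap K _ b := by
    rw [← map_mul, Algebra.TensorProduct.tmul_mul_tmul, one_mul, ← sq, hβ,
      ← Algebra.TensorProduct.algebraMap_apply', f.commutes]
  obtain ⟨u, v, hu, hv, hx⟩ :=
    QuaternionAlgebra.exists_eq_tmul_one_add_one_tmul_of_map_star_eq_neg h2 hskew
  rw [hx, QuaternionAlgebra.tmul_one_add_one_tmul_mul_self_eq_algebraMap_iff h2 hu hv] at hsq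
  rcases hsq with ⟨-, hvv⟩ | ⟨-, huu⟩
  · exact hbn₂ (QuaternionAlgebra.nonempty_tensor_algEquiv_matrix_of_mul_self_eq_algebraMap
      h2 ha₂ hdiv₂ hv hb hvv hβ)
  · exact hbn₁ (QuaternionAlgebra.nonempty_tensor_algEquiv_matrix_of_mul_self_eq_algebraMap
      h2 ha₁ hdiv₁ hu hb huu hβ)

/-- Let `K` be a field of characteristic `≠ 2`, `a, b ∈ K^×` nonsquares,
`L_a = K(√a)`, `L_b = K(√b)` the corresponding quadratic field extensions with nontrivial
automorphisms `s_a, s_b`, and suppose `H₁, H₂` are quaternion division algebras over `K` such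
that `K(√b)` splits neither `H₁` nor `H₂` while `K(√a)` splits both.  Then there is no
embedding of algebras with involution of `(E,σ) = (L_a ⊗ L_b, s_a ⊗ s_b)` into
`(H₁ ⊗ H₂, τ₁ ⊗ τ₂)`, where `τᵢ` are the canonical involutions. -/
theorem no_involution_embedding_into_quaternion_tensor
    (K : Type) [Field K] (h2 : (2 : K) ≠ 0)
    (a b : K) (hsa : ¬ IsSquare a) (hsb : ¬ IsSquare b)
    (La : Type) [Field La] [Algebra K La] (α : La) (hα : α ^ 2 = algebraMap K La a)
    (hLa : Module.finrank K La = 2)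
    (sa : La ≃ₐ[K] La) (hsa' : sa ≠ AlgEquiv.refl)
    (Lb : Type) [Field Lb] [Algebra K Lb] (β : Lb) (hβ : β ^ 2 = algebraMap K Lb b)
    (hLb : Module.finrank K Lb = 2)
    (sb : Lb ≃ₐ[K] Lb) (hsb' : sb ≠ AlgEquiv.refl)
    (a₁ b₁ a₂ b₂ : K) (ha₁ : a₁ ≠ 0) (hb₁ : b₁ ≠ 0) (ha₂ : a₂ ≠ 0) (hb₂ : b₂ ≠ 0)
    (hdiv₁ : ∀ x : QuaternionAlgebra K a₁ 0 b₁, x ≠ 0 → IsUnit x)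
    (hdiv₂ : ∀ x : QuaternionAlgebra K a₂ 0 b₂, x ≠ 0 → IsUnit x)
    -- `K(√b)` splits neither `H₁` nor `H₂` :
    (hbn₁ : ¬ Nonempty
      ((Lb ⊗[K] QuaternionAlgebra K a₁ 0 b₁) ≃ₐ[Lb] Matrix (Fin 2) (Fin 2) Lb))
    (hbn₂ : ¬ Nonempty
      ((Lb ⊗[K] QuaternionAlgebra K a₂ 0 b₂) ≃ₐ[Lb] Matrix (Fin 2) (Fin 2) Lb))
    -- `K(√a)` splits both `H₁` and `H₂` :
    (has₁ : Nonempty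
      ((La ⊗[K] QuaternionAlgebra K a₁ 0 b₁) ≃ₐ[La] Matrix (Fin 2) (Fin 2) La))
    (has₂ : Nonempty
      ((La ⊗[K] QuaternionAlgebra K a₂ 0 b₂) ≃ₐ[La] Matrix (Fin 2) (Fin 2) La)) :
    ¬ ∃ f : (La ⊗[K] Lb) →ₐ[K]
        (QuaternionAlgebra K a₁ 0 b₁ ⊗[K] QuaternionAlgebra K a₂ 0 b₂),
      Function.Injective f ∧
      ∀ e : La ⊗[K] Lb,
        TensorProduct.map (quatStarLM K a₁ b₁) (quatStarLM K a₂ b₂) (f e)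
          = f (Algebra.TensorProduct.map sa.toAlgHom sb.toAlgHom e) :=
  no_involution_embedding_into_quaternion_tensor_general K h2 b hsb La sa Lb β hβ hLb sb hsb' a₁ b₁
    a₂ b₂ ha₁ ha₂ hdiv₁ hdiv₂ hbn₁ hbn₂
end

section
/- Let E = ℂ^n with involution σ built from ρ 'split' pairs (ℂ×ℂ with swap composed with complex conjugation on each pair) and n−2ρ copies of ℂ with complex conjugation, and let h be a nondegenerate hermitian form of rank n over ℂ/ℝ. Then (E,σ) embeds into (M_n(ℂ), adjoint involution of h) as an algebra with involution if and only if the signature of h has the form (r+ρ, s+ρ) for some nonnegative integers r, s (with r+s = n−2ρ). -/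
/-- The index set for a rank `n = 2ρ + m` étale `ℂ`-algebra with `ρ` split pairs and `m`
conjugation factors. -/
abbrev CMIndex (ρ m : ℕ) := (Fin ρ × Bool) ⊕ Fin m

/-- The involution of `E = ℂ^{2ρ+m}` built from `ρ` split pairs (swap composed with complex
conjugation on each pair) and `m` copies of `ℂ` with complex conjugation. -/
def cmInvolution (ρ m : ℕ) (x : CMIndex ρ m → ℂ) : CMIndex ρ m → ℂ
  | Sum.inl (k, bb) => star (x (Sum.inl (k, !bb)))
  | Sum.inr j => star (x (Sum.inr j))

/-- A hermitian form `h` on `ι → ℂ` has signature `(p, q)` if it diagonalizes with `p`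
entries `+1` and `q` entries `−1`. -/
def HasSignature {ι : Type} [Fintype ι] (h : (ι → ℂ) → (ι → ℂ) → ℂ) (p q : ℕ) : Prop :=
  ∃ (φ : (ι → ℂ) ≃ₗ[ℂ] (ι → ℂ)) (d : ι → ℝ),
    (∀ i, d i = 1 ∨ d i = -1) ∧
    (∀ x y, h (φ x) (φ y) = ∑ i, (d i : ℂ) * x i * star (y i)) ∧
    Nat.card {i // d i = 1} = p ∧ Nat.card {i // d i = -1} = q

/-!
Diagonalizing the Gram matrix of `h` by the spectral theorem shows that `h` has some signature
`(p, q)` with `p + q = 2ρ + m`.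

Given an embedding `f`, let `ε ∈ E` be `1` on the first factor of each split pair and `0`
elsewhere. Since `σ(ε) ε = 0`, compatibility with the adjoint involution makes the image of
`f ε` totally isotropic, and it has dimension at least `ρ` because `f ε` dominates `ρ` nonzero
orthogonal idempotents. A totally isotropic subspace meets the positive and the negative definite
subspaces of `h` trivially, hence `p ≥ ρ` and `q ≥ ρ`.

Conversely, the trace form `T_a(x, y) = Tr(a x σ(y))` satisfies `T_a(e x, y) = T_a(x, σ(e) y)`,
and for `a = (1, …, 1, ±1, …, ±1)` a hyperbolic change of coordinates on each split pair
diagonalizes it with signature `(ρ + r, ρ + s)`. Forms of equal signature are isometric, and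
transporting the regular representation of `E` along such an isometry gives the embedding.
-/

open Matrix Module

theorem Matrix.IsHermitian.exists_conjTranspose_mul_mul_eq_diagonal_sign
    {𝕜 n : Type*} [RCLike 𝕜] [Fintype n] [DecidableEq n] {A : Matrix n n 𝕜}
    (hA : A.IsHermitian) (hdet : A.det ≠ 0) :
    ∃ (P : Matrix n n 𝕜) (d : n → ℝ), IsUnit P.det ∧ (∀ i, d i = 1 ∨ d i = -1) ∧
      Pᴴ * A * P = diagonal fun i => (d i : 𝕜) := by
  set μ := hA.eigenvalues
  have hμ : ∀ i, μ i ≠ 0 := by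
    intro i hi
    apply hdet
    rw [hA.det_eq_prod_eigenvalues]
    exact Finset.prod_eq_zero (Finset.mem_univ i) (by simp [μ, hi])
  set c : n → ℝ := fun i => (Real.sqrt |μ i|)⁻¹
  have hc : ∀ i, c i * c i = |μ i|⁻¹ := fun i => by
    rw [← mul_inv, Real.mul_self_sqrt (abs_nonneg _)]
  set U : Matrix n n 𝕜 := (hA.eigenvectorUnitary : Matrix n n 𝕜)
  have hU : star U * A * U = diagonal (RCLike.ofReal ∘ μ) := by
    rw [← hA.conjStarAlgAut_star_eigenvectorUnitary, Unitary.conjStarAlgAut_star_apply]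
  refine ⟨U * diagonal (RCLike.ofReal ∘ c), fun i => μ i / |μ i|, ?_, fun i => ?_, ?_⟩
  · rw [det_mul, det_diagonal]
    refine (UnitaryGroup.det_isUnit hA.eigenvectorUnitary).mul ?_
    simp [Finset.prod_ne_zero_iff, c, hμ]
  · rcases (hμ i).lt_or_gt with hi | hi
    · right; simp [abs_of_neg hi, hμ i]
    · left; simp [abs_of_pos hi, hμ i]
  · set D : Matrix n n 𝕜 := diagonal (RCLike.ofReal ∘ c)
    have hD : Dᴴ = D := by
      rw [diagonal_conjTranspose]; congr 1; funext i; simp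
    rw [conjTranspose_mul, hD, ← star_eq_conjTranspose,
      show D * star U * A * (U * D) = D * (star U * A * U) * D by simp only [Matrix.mul_assoc],
      hU, diagonal_mul_diagonal, diagonal_mul_diagonal]
    congr 1; funext i
    simp only [Function.comp_apply, div_eq_mul_inv, ← hc]
    push_cast
    ring

section HermitianForm

variable {ι : Type} [DecidableEq ι] (B : (ι → ℂ) →ₗ[ℂ] (ι → ℂ) →ₗ⋆[ℂ] ℂ)

def gramMatrix : Matrix ι ι ℂ :=
  Matrix.of fun i j => B (Pi.single j 1) (Pi.single i 1)

variable {B}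

theorem gramMatrix_isHermitian (hB : ∀ x y, B y x = star (B x y)) :
    (gramMatrix B).IsHermitian := by
  ext i j
  simp [gramMatrix, hB (Pi.single i 1)]

variable [Fintype ι]

theorem apply_eq_star_dotProduct_gramMatrix_mulVec (x y : ι → ℂ) :
    B x y = star y ⬝ᵥ (gramMatrix B *ᵥ x) := by
  rw [apply_eq_dotProduct_toMatrix₂_mulVec (Pi.basisFun ℂ ι) (Pi.basisFun ℂ ι)]
  simp only [dotProduct, RingHom.coe_id, Function.comp_apply, Pi.basisFun_repr, id_eq, mulVec,
    LinearMap.toMatrix₂_apply, Pi.basisFun_apply, Finset.mul_sum, Pi.star_apply, RCLike.star_def,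
    gramMatrix, of_apply]
  rw [Finset.sum_comm]
  exact Finset.sum_congr rfl fun _ _ => Finset.sum_congr rfl fun _ _ => by ring

theorem det_gramMatrix_ne_zero (hB : B.SeparatingLeft) : (gramMatrix B).det ≠ 0 := by
  intro hdet
  obtain ⟨v, hv0, hv⟩ := exists_mulVec_eq_zero_iff.2 hdet
  refine hv0 (hB v fun y => ?_)
  rw [apply_eq_star_dotProduct_gramMatrix_mulVec, hv, dotProduct_zero]

theorem exists_hasSignature (hB : ∀ x y, B y x = star (B x y)) (hB' : B.SeparatingLeft) :
    ∃ p q, HasSignature (fun x y => B x y) p q := by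
  obtain ⟨P, d, hP, hd, hPBP⟩ :=
    (gramMatrix_isHermitian hB).exists_conjTranspose_mul_mul_eq_diagonal_sign
      (det_gramMatrix_ne_zero hB')
  refine ⟨_, _, P.toLinearEquiv' (P.invertibleOfIsUnitDet hP), d, hd, fun x y => ?_, rfl, rfl⟩
  change B (P *ᵥ x) (P *ᵥ y) = _
  rw [apply_eq_star_dotProduct_gramMatrix_mulVec, star_mulVec, ← dotProduct_mulVec,
    mulVec_mulVec, mulVec_mulVec, hPBP]
  simp only [dotProduct, mulVec_diagonal, Pi.star_apply]
  exact Finset.sum_congr rfl fun _ _ => by rw [RCLike.ofReal_eq_complex_ofReal]; ring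

end HermitianForm

section Signature

variable {ι : Type} [Fintype ι] {h h' : (ι → ℂ) → (ι → ℂ) → ℂ} {p q q' : ℕ}

theorem HasSignature.add_eq_card (hh : HasSignature h p q) : p + q = Fintype.card ι := by
  obtain ⟨-, d, hd, -, rfl, rfl⟩ := hh
  have hneg : ∀ i, d i = -1 ↔ ¬d i = 1 := fun i => by
    rcases hd i with hi | hi <;> norm_num [hi]
  rw [← Nat.card_eq_fintype_card, ← Nat.card_congr (Equiv.sumCompl fun i => d i = 1),
    Nat.card_sum, Nat.card_congr (Equiv.subtypeEquivRight hneg)]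

theorem finrank_add_card_le_of_isotropic {φ : (ι → ℂ) ≃ₗ[ℂ] (ι → ℂ)} {d : ι → ℝ}
    (hform : ∀ x y, h (φ x) (φ y) = ∑ i, (d i : ℂ) * x i * star (y i)) {t : ℝ} (ht : t ≠ 0)
    {W : Submodule ℂ (ι → ℂ)} (hW : ∀ x ∈ W, h x x = 0) :
    finrank ℂ W + Nat.card {i // d i = t} ≤ Fintype.card ι := by
  classical
  -- `h` is definite on the image under `φ` of the vectors supported on `{i | d i = t}`
  let U : Submodule ℂ (ι → ℂ) := Submodule.pi {i | d i ≠ t} fun _ => ⊥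
  have hU : Nat.card {i // d i = t} ≤ finrank ℂ U := by
    have hli : LinearIndependent ℂ fun i : {i // d i = t} => (Pi.single i.1 1 : ι → ℂ) :=
      (Pi.basisFun ℂ ι).linearIndependent.comp _ Subtype.val_injective
    rw [Nat.card_eq_fintype_card, ← finrank_span_eq_card hli]
    refine Submodule.finrank_mono (Submodule.span_le.2 ?_)
    rintro _ ⟨i, rfl⟩ j hj
    exact Pi.single_eq_of_ne (fun hji : j = i.1 => hj (hji ▸ i.2)) 1
  have hdef : ∀ z ∈ U, h (φ z) (φ z) = 0 → z = 0 := by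
    intro z hz hzz
    have hsum : h (φ z) (φ z) = t * (z ⬝ᵥ star z) := by
      rw [hform, dotProduct, Finset.mul_sum]
      refine Finset.sum_congr rfl fun i _ => ?_
      by_cases hi : d i = t
      · rw [hi, Pi.star_apply, mul_assoc]
      · simp [(Submodule.mem_bot ℂ).1 (Submodule.mem_pi.1 hz i hi)]
    rw [hsum] at hzz
    open scoped ComplexOrder in
    exact dotProduct_self_star_eq_zero.1 ((mul_eq_zero.1 hzz).resolve_left (by exact_mod_cast ht))
  have hdisj : Disjoint W (U.map (φ : (ι → ℂ) →ₗ[ℂ] (ι → ℂ))) := by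
    rw [Submodule.disjoint_def]
    rintro _ hx ⟨z, hz, rfl⟩
    rw [hdef z hz (hW _ hx), map_zero]
  calc finrank ℂ W + Nat.card {i // d i = t}
      ≤ finrank ℂ W + finrank ℂ (U.map (φ : (ι → ℂ) →ₗ[ℂ] (ι → ℂ))) := by
        rw [LinearEquiv.finrank_map_eq]; omega
    _ ≤ finrank ℂ (ι → ℂ) := Submodule.finrank_add_finrank_le_of_disjoint hdisj
    _ = Fintype.card ι := Module.finrank_fintype_fun_eq_card ℂ

theorem HasSignature.finrank_add_le (hh : HasSignature h p q) {W : Submodule ℂ (ι → ℂ)}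
    (hW : ∀ x ∈ W, h x x = 0) :
    finrank ℂ W + p ≤ Fintype.card ι ∧ finrank ℂ W + q ≤ Fintype.card ι := by
  obtain ⟨φ, d, -, hform, rfl, rfl⟩ := hh
  exact ⟨finrank_add_card_le_of_isotropic hform one_ne_zero hW,
    finrank_add_card_le_of_isotropic hform (by norm_num) hW⟩

omit [Fintype ι] in
theorem exists_perm_apply_eq_of_card_eq [Finite ι] {d d' : ι → ℝ}
    (hd : ∀ i, d i = 1 ∨ d i = -1) (hd' : ∀ i, d' i = 1 ∨ d' i = -1)
    (hcard : Nat.card {i // d' i = 1} = Nat.card {i // d i = 1}) :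
    ∃ g : Equiv.Perm ι, ∀ i, d (g i) = d' i := by
  classical
  obtain ⟨e⟩ := Finite.card_eq.1 hcard
  refine ⟨e.extendSubtype, fun i => ?_⟩
  by_cases hi : d' i = 1
  · rw [hi]
    exact e.extendSubtype_mem i hi
  · rw [(hd' i).resolve_left hi]
    exact (hd _).resolve_left (e.extendSubtype_not_mem i hi)

theorem HasSignature.exists_isometry (hh : HasSignature h p q) (hh' : HasSignature h' p q') :
    ∃ ψ : (ι → ℂ) ≃ₗ[ℂ] (ι → ℂ), ∀ x y, h (ψ x) (ψ y) = h' x y := by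
  obtain ⟨φ, d, hd, hform, hp, -⟩ := hh
  obtain ⟨φ', d', hd', hform', hp', -⟩ := hh'
  obtain ⟨g, hg⟩ := exists_perm_apply_eq_of_card_eq hd hd' (hp'.trans hp.symm)
  refine ⟨φ'.symm.trans ((LinearEquiv.funCongrLeft ℂ ℂ g.symm).trans φ), fun x y => ?_⟩
  obtain ⟨x, rfl⟩ := φ'.surjective x
  obtain ⟨y, rfl⟩ := φ'.surjective y
  simp only [LinearEquiv.trans_apply, LinearEquiv.symm_apply_apply, hform, hform']
  rw [← Equiv.sum_comp g]
  simp [LinearEquiv.funCongrLeft_apply, hg]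

end Signature

theorem card_le_finrank_range_of_orthogonalIdempotents {K V ι : Type*} [Field K]
    [AddCommGroup V] [Module K V] [FiniteDimensional K V] [Fintype ι]
    {P : ι → Module.End K V} (hP : OrthogonalIdempotents P) (hP0 : ∀ i, P i ≠ 0)
    {T : Module.End K V} (hT : ∀ i, T * P i = P i) :
    Fintype.card ι ≤ finrank K (LinearMap.range T) := by
  classical
  have hne : ∀ i, ∃ w, P i w ≠ 0 := fun i => by
    by_contra! H
    exact hP0 i (LinearMap.ext H)
  choose w hw using hne
  set v := fun i => P i (w i)
  have hPv : ∀ i j, P i (v j) = if i = j then v j else 0 := fun i j => by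
    simp only [v, ← Module.End.mul_apply, hP.mul_eq]
    split_ifs with hij
    · rw [hij]
    · rfl
  have hli : LinearIndependent K v := by
    rw [Fintype.linearIndependent_iff]
    intro g hg i
    have := congrArg (P i) hg
    simp only [map_sum, map_smul, hPv, smul_ite, smul_zero, Finset.sum_ite_eq,
      Finset.mem_univ, if_true, map_zero] at this
    exact (smul_eq_zero.1 this).resolve_right (hw i)
  rw [← finrank_span_eq_card hli]
  refine Submodule.finrank_mono (Submodule.span_le.2 (Set.range_subset_iff.2 fun i => ?_))
  exact ⟨v i, by rw [← Module.End.mul_apply, hT]⟩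

section CM

open ComplexConjugate

variable (ρ m : ℕ)

theorem cmInvolution_mul (x y : CMIndex ρ m → ℂ) :
    cmInvolution ρ m (x * y) = cmInvolution ρ m x * cmInvolution ρ m y := by
  ext (⟨k, b⟩ | j) <;> simp [cmInvolution]

theorem cmInvolution_cmInvolution (x : CMIndex ρ m → ℂ) :
    cmInvolution ρ m (cmInvolution ρ m x) = x := by
  ext (⟨k, b⟩ | j) <;> simp [cmInvolution]

/-- The trace form `T_a(x, y) = Tr_{E/ℂ}(a x σ(y))`. -/
def cmTraceForm (a x y : CMIndex ρ m → ℂ) : ℂ :=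
  ∑ i, a i * x i * cmInvolution ρ m y i

theorem cmTraceForm_mul_left (a e x y : CMIndex ρ m → ℂ) :
    cmTraceForm ρ m a (e * x) y = cmTraceForm ρ m a x (cmInvolution ρ m e * y) := by
  simp only [cmTraceForm, cmInvolution_mul, cmInvolution_cmInvolution, Pi.mul_apply]
  exact Finset.sum_congr rfl fun _ _ => by ring

theorem exists_cm_embedding_of_isometry {h : (CMIndex ρ m → ℂ) → (CMIndex ρ m → ℂ) → ℂ}
    {a : CMIndex ρ m → ℂ} (ψ : (CMIndex ρ m → ℂ) ≃ₗ[ℂ] (CMIndex ρ m → ℂ))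
    (hψ : ∀ x y, h (ψ x) (ψ y) = cmTraceForm ρ m a x y) :
    ∃ f : (CMIndex ρ m → ℂ) →ₐ[ℂ] Module.End ℂ (CMIndex ρ m → ℂ),
      Function.Injective f ∧
      ∀ e x y, h (f e x) y = h x (f (cmInvolution ρ m e) y) := by
  refine ⟨(ψ.conjAlgEquiv ℂ).toAlgHom.comp (Algebra.lmul ℂ _),
    (ψ.conjAlgEquiv ℂ).injective.comp Algebra.lmul_injective, fun e x y => ?_⟩
  obtain ⟨x, rfl⟩ := ψ.surjective x
  obtain ⟨y, rfl⟩ := ψ.surjective y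
  simp [LinearEquiv.conjAlgEquiv_apply, hψ, cmTraceForm_mul_left]

noncomputable def cmHyperbolic : (CMIndex ρ m → ℂ) →ₗ[ℂ] (CMIndex ρ m → ℂ) where
  toFun x
    | Sum.inl (k, false) => (√2 : ℂ)⁻¹ * (x (Sum.inl (k, false)) + x (Sum.inl (k, true)))
    | Sum.inl (k, true) => (√2 : ℂ)⁻¹ * (x (Sum.inl (k, false)) - x (Sum.inl (k, true)))
    | Sum.inr j => x (Sum.inr j)
  map_add' x y := by ext (⟨k, _ | _⟩ | j) <;> simp <;> ring
  map_smul' c x := by ext (⟨k, _ | _⟩ | j) <;> simp <;> ring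

theorem sqrt_two_inv_mul_self : (√2 : ℂ)⁻¹ * (√2 : ℂ)⁻¹ = 1 / 2 := by
  rw [← mul_inv, ← Complex.ofReal_mul, Real.mul_self_sqrt zero_le_two]
  norm_num

theorem cmHyperbolic_involutive : Function.Involutive (cmHyperbolic ρ m) := by
  intro x
  ext (⟨k, _ | _⟩ | j)
  · simp only [cmHyperbolic, LinearMap.coe_mk, AddHom.coe_mk]
    linear_combination (2 * x (Sum.inl (k, false))) * sqrt_two_inv_mul_self
  · simp only [cmHyperbolic, LinearMap.coe_mk, AddHom.coe_mk]
    linear_combination (2 * x (Sum.inl (k, true))) * sqrt_two_inv_mul_self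
  · rfl

def cmSign (s : Fin m → ℝ) : CMIndex ρ m → ℝ :=
  Sum.elim (fun kb => if kb.2 then -1 else 1) s

theorem cmTraceForm_cmHyperbolic (s : Fin m → ℝ) (x y : CMIndex ρ m → ℂ) :
    cmTraceForm ρ m (Sum.elim 1 fun j => (s j : ℂ)) (cmHyperbolic ρ m x) (cmHyperbolic ρ m y) =
      ∑ i, (cmSign ρ m s i : ℂ) * x i * star (y i) := by
  simp only [cmTraceForm, Fintype.sum_sum_type, Fintype.sum_prod_type, Fintype.sum_bool]
  congr 1
  refine Finset.sum_congr rfl fun k _ => ?_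
  simp only [cmHyperbolic, cmInvolution, cmSign, LinearMap.coe_mk, AddHom.coe_mk, Sum.elim_inl,
    Pi.one_apply, one_mul, Bool.not_true, Bool.not_false, Bool.false_eq_true, ↓reduceIte,
    star_mul', star_inv₀, star_add, star_sub, RCLike.star_def, Complex.conj_ofReal,
    Complex.ofReal_neg, Complex.ofReal_one, neg_mul]
  linear_combination (2 * (x (Sum.inl (k, false)) * conj (y (Sum.inl (k, false))) -
    x (Sum.inl (k, true)) * conj (y (Sum.inl (k, true))))) * sqrt_two_inv_mul_self

theorem card_cmSign (s : Fin m → ℝ) {t : ℝ} (ht : t = 1 ∨ t = -1) :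
    Nat.card {i // cmSign ρ m s i = t} = Nat.card {j // s j = t} + ρ := by
  classical
  rw [Nat.card_congr (Equiv.subtypeSum), Nat.card_sum, add_comm]
  congr 1
  rw [Nat.card_eq_fintype_card, Fintype.card_subtype, Finset.card_filter, Fintype.sum_prod_type]
  rcases ht with rfl | rfl <;> norm_num [cmSign]

theorem hasSignature_cmTraceForm (s : Fin m → ℝ) (hs : ∀ j, s j = 1 ∨ s j = -1) :
    HasSignature (cmTraceForm ρ m (Sum.elim 1 fun j => (s j : ℂ)))
      (Nat.card {j // s j = 1} + ρ) (Nat.card {j // s j = -1} + ρ) := by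
  refine ⟨LinearEquiv.ofInvolutive _ (cmHyperbolic_involutive ρ m), cmSign ρ m s, ?_,
    cmTraceForm_cmHyperbolic ρ m s, card_cmSign ρ m s (Or.inl rfl), card_cmSign ρ m s (Or.inr rfl)⟩
  rintro (⟨k, _ | _⟩ | j) <;> simp [cmSign, hs]

def cmSplitIdempotent : CMIndex ρ m → ℂ :=
  Sum.elim (fun kb => if kb.2 then 0 else 1) 0

theorem cmInvolution_cmSplitIdempotent_mul :
    cmInvolution ρ m (cmSplitIdempotent ρ m) * cmSplitIdempotent ρ m = 0 := by
  ext (⟨k, _ | _⟩ | j) <;> simp [cmInvolution, cmSplitIdempotent]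

theorem cmSplitIdempotent_mul_single (k : Fin ρ) :
    cmSplitIdempotent ρ m * Pi.single (Sum.inl (k, false)) 1 =
      Pi.single (Sum.inl (k, false)) 1 := by
  ext i
  by_cases hi : i = Sum.inl (k, false)
  · simp [hi, cmSplitIdempotent]
  · simp [hi]

theorem le_finrank_range_cmSplitIdempotent {V : Type*} [AddCommGroup V] [Module ℂ V]
    [FiniteDimensional ℂ V] (f : (CMIndex ρ m → ℂ) →ₐ[ℂ] Module.End ℂ V)
    (hf : Function.Injective f) :
    ρ ≤ finrank ℂ (LinearMap.range (f (cmSplitIdempotent ρ m))) := by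
  classical
  let e : Fin ρ → CMIndex ρ m → ℂ := fun k => Pi.single (Sum.inl (k, false)) 1
  have he : OrthogonalIdempotents e :=
    (CompleteOrthogonalIdempotents.single fun _ => ℂ).1.embedding
      ⟨fun k => Sum.inl (k, false), fun k l hkl => by simpa using hkl⟩
  simpa using card_le_finrank_range_of_orthogonalIdempotents (he.map f)
    (fun k => (map_ne_zero_iff f hf).2 (by simp [e]))
    (fun k => show f _ * f (e k) = f (e k) by rw [← map_mul, cmSplitIdempotent_mul_single])

theorem isotropic_range_of_cmInvolution_mul_eq_zero
    {h : (CMIndex ρ m → ℂ) → (CMIndex ρ m → ℂ) → ℂ}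
    (h_addr : ∀ x y y', h x (y + y') = h x y + h x y')
    {f : (CMIndex ρ m → ℂ) →ₐ[ℂ] Module.End ℂ (CMIndex ρ m → ℂ)}
    (hf : ∀ e x y, h (f e x) y = h x (f (cmInvolution ρ m e) y))
    {e : CMIndex ρ m → ℂ} (he : cmInvolution ρ m e * e = 0) :
    ∀ x ∈ LinearMap.range (f e), h x x = 0 := by
  rintro _ ⟨u, rfl⟩
  rw [hf, ← Module.End.mul_apply, ← map_mul, he, map_zero, LinearMap.zero_apply]
  simpa using h_addr u 0 0

end CM

theorem exists_sign_card_eq {m r : ℕ} (hr : r ≤ m) :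
    ∃ s : Fin m → ℝ, (∀ j, s j = 1 ∨ s j = -1) ∧ Nat.card {j // s j = 1} = r := by
  refine ⟨fun j => if (j : ℕ) < r then 1 else -1, fun j => ?_, ?_⟩
  · dsimp only
    split_ifs <;> simp
  · calc Nat.card {j : Fin m // (if (j : ℕ) < r then (1 : ℝ) else -1) = 1}
        = Nat.card {j : Fin m // (j : ℕ) < r} :=
          Nat.card_congr (Equiv.subtypeEquivRight fun j => by split_ifs with hj <;> norm_num [hj])
      _ = r := by rw [← Nat.card_congr (Fin.castLEquiv hr), Nat.card_fin]

/-- Let `E = ℂ^n` (`n = 2ρ + m`) with the involution `σ` built from `ρ`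
split pairs and `m` conjugation factors, and let `h` be a nondegenerate hermitian form of rank
`n` over `ℂ/ℝ`.  Then `(E,σ)` embeds into `(M_n(ℂ), adjoint involution of h)` as an algebra
with involution if and only if the signature of `h` is `(r+ρ, s+ρ)` for some nonnegative
integers `r, s` with `r + s = m`. -/
theorem cm_embedding_iff_signature
    (ρ m : ℕ)
    (h : (CMIndex ρ m → ℂ) → (CMIndex ρ m → ℂ) → ℂ)
    (h_addl : ∀ x x' y, h (x + x') y = h x y + h x' y)
    (h_addr : ∀ x y y', h x (y + y') = h x y + h x y')
    (h_smull : ∀ (l : ℂ) x y, h (l • x) y = l * h x y)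
    (h_smulr : ∀ (l : ℂ) x y, h x (l • y) = star l * h x y)
    (h_herm : ∀ x y, h y x = star (h x y))
    (h_nd : ∀ x, (∀ y, h x y = 0) → x = 0) :
    (∃ f : (CMIndex ρ m → ℂ) →ₐ[ℂ] Module.End ℂ (CMIndex ρ m → ℂ),
        Function.Injective f ∧
        ∀ (e : CMIndex ρ m → ℂ) (x y : CMIndex ρ m → ℂ),
          h (f e x) y = h x (f (cmInvolution ρ m e) y)) ↔
    (∃ r s : ℕ, r + s = m ∧ HasSignature h (r + ρ) (s + ρ)) := by
  have hcard : Fintype.card (CMIndex ρ m) = 2 * ρ + m := by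
    simp only [Fintype.card_sum, Fintype.card_prod, Fintype.card_fin, Fintype.card_bool]
    ring
  constructor
  · rintro ⟨f, hf, hcompat⟩
    obtain ⟨p, q, hsig⟩ := exists_hasSignature
      (B := LinearMap.mk₂'ₛₗ (RingHom.id ℂ) (starRingEnd ℂ) h h_addl h_smull h_addr h_smulr)
      h_herm h_nd
    have hρ := le_finrank_range_cmSplitIdempotent ρ m f hf
    obtain ⟨hp, hq⟩ := hsig.finrank_add_le (isotropic_range_of_cmInvolution_mul_eq_zero ρ m
      h_addr hcompat (cmInvolution_cmSplitIdempotent_mul ρ m))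
    have hpq := hsig.add_eq_card
    refine ⟨p - ρ, q - ρ, by omega, ?_⟩
    rwa [Nat.sub_add_cancel (by omega), Nat.sub_add_cancel (by omega)]
  · rintro ⟨r, s, hrs, hsig⟩
    obtain ⟨a, ha, har⟩ := exists_sign_card_eq (show r ≤ m by omega)
    obtain ⟨ψ, hψ⟩ := hsig.exists_isometry (har ▸ hasSignature_cmTraceForm ρ m a ha)
    exact exists_cm_embedding_of_isometry ρ m ψ hψ
end

section
/- Let K be a field of characteristic ≠ 2, A a central simple K-algebra of even degree 2r with orthogonal involution θ, and ε : (E,σ) → (A,θ) an embedding of an étale algebra with involution of rank 2r satisfying the dimension condition. Suppose γ ∈ A^× is a similitude of (A,θ) (i.e. γθ(γ) = λ ∈ K^×) such that Int(γ) ∘ ε ∘ σ = ε. Then γ is a proper similitude (Nrd(γ) = λ^r) if r is even, and an improper similitude (Nrd(γ) = −λ^r) if r is odd. -/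
/-!
Conjugation by `γ` negates the skew element `a = ε(√d)`, so `γ · a · θ(γ) = -λ • a`.
Taking Pfaffians, the transport rule brings out `Nrd γ` and homogeneity of degree `r` brings out
`(-λ)^r`; both multiply `π_θ(a)`, which is invertible because `π_θ(a)² = ±Nrd(a) ≠ 0`.
-/

section Similitude

variable {K A Z : Type*} [CommRing K] [Ring A] [Algebra K A] [CommRing Z] [Algebra K Z]

theorem mul_mul_eq_smul_of_conj_eq {γ γi a b δ : A} {lam : K} (hγi : γi * γ = 1)
    (hconj : γ * a * γi = b) (hδ : γ * δ = algebraMap K A lam) :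
    γ * a * δ = lam • b :=
  calc γ * a * δ = γ * a * γi * (γ * δ) := by
        rw [mul_assoc (γ * a) γi, ← mul_assoc γi, hγi, one_mul]
    _ = lam • b := by rw [hconj, hδ, Algebra.smul_def, Algebra.commutes]

theorem eq_of_smul_eq_smul_of_isUnit (hinj : Function.Injective (algebraMap K Z)) {z : Z}
    (hz : IsUnit z) {c d : K} (h : c • z = d • z) : c = d :=
  hinj <| hz.mul_right_cancel <| by rwa [Algebra.smul_def, Algebra.smul_def] at h

theorem nrd_eq_pow_of_mul_mul_eq_smul (hinj : Function.Injective (algebraMap K Z))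
    {θ : A → A} {Nrd : A → K} {pf : A → Z} {r : ℕ}
    (hpf_transport : ∀ g a : A, θ a = -a → pf (g * a * θ g) = Nrd g • pf a)
    (hpf_smul : ∀ (c : K) (a : A), θ a = -a → pf (c • a) = c ^ r • pf a)
    {γ a : A} {c : K} (ha : θ a = -a) (hpf : IsUnit (pf a)) (hγ : γ * a * θ γ = c • a) :
    Nrd γ = c ^ r :=
  eq_of_smul_eq_smul_of_isUnit hinj hpf <| by
    rw [← hpf_transport γ a ha, hγ, hpf_smul c a ha]

end Similitude

theorem isUnit_pfaffian {K A Z : Type*} [Field K] [CommRing Z] [Algebra K Z]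
    (hZunit : ∀ c : K, c ≠ 0 → IsUnit (algebraMap K Z c)) {Nrd : A → K} {pf : A → Z} {r : ℕ}
    {a : A} (hsq : pf a ^ 2 = algebraMap K Z ((-1) ^ r * Nrd a)) (hNrd : Nrd a ≠ 0) :
    IsUnit (pf a) :=
  (isUnit_pow_iff two_ne_zero).mp <| hsq ▸ hZunit _ (mul_ne_zero (by simp) hNrd)

theorem similitude_proper_iff_even_general
    (K : Type u) [Field K]
    (A : Type u) [Ring A] [Algebra K A]
    (r : ℕ)
    -- the orthogonal involution θ
    (θ : A → A)
    -- the étale algebra with involution (E, σ), of rank 2r with fixed algebra of rank r,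
    -- embedded in (A, θ) via ε
    (E : Type u) [CommRing E] [Algebra K E]
    (σ : E →ₐ[K] E)
    (ε : E →ₐ[K] A)
    (hεθ : ∀ e : E, θ (ε e) = ε (σ e))
    -- E = F(√d): a σ-skew unit x
    (x : E) (hxσ : σ x = -x)
    -- the reduced norm of A, as data with its characteristic properties
    (Nrd : A → K)
    -- the center Z(A,θ) of the Clifford algebra and the generalized Pfaffian π_θ
    (Z : Type u) [CommRing Z] [Algebra K Z]
    (hZinj : Function.Injective (algebraMap K Z))
    (hZunit : ∀ c : K, c ≠ 0 → IsUnit (algebraMap K Z c))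
    (pf : A → Z)
    (hpf_transport : ∀ (g a : A), θ a = -a → pf (g * a * θ g) = Nrd g • pf a)
    (hpf_sq : ∀ a : A, θ a = -a → pf a ^ 2 = algebraMap K Z ((-1) ^ r * Nrd a))
    (hpf_smul : ∀ (c : K) (a : A), θ a = -a → pf (c • a) = c ^ r • pf a)
    (hNrdx : Nrd (ε x) ≠ 0)
    -- γ is a similitude with multiplier λ, with Int(γ) ∘ ε ∘ σ = ε
    (γ γi : A) (hγi' : γi * γ = 1)
    (lam : K) (hsim : γ * θ γ = algebraMap K A lam)
    (hint : ∀ e : E, γ * ε (σ e) * γi = ε e) :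
    Nrd γ = (-1) ^ r * lam ^ r := by
  have hskew : θ (ε x) = -ε x := by rw [hεθ, hxσ, map_neg]
  have hconj : γ * ε x * γi = -ε x := by
    simpa [hxσ, neg_eq_iff_eq_neg] using hint x
  have hγ : γ * ε x * θ γ = (-lam) • ε x := by
    rw [mul_mul_eq_smul_of_conj_eq hγi' hconj hsim, smul_neg, neg_smul]
  rw [nrd_eq_pow_of_mul_mul_eq_smul hZinj hpf_transport hpf_smul hskew
    (isUnit_pfaffian hZunit (hpf_sq _ hskew) hNrdx) hγ, neg_pow]

/-- Let `K` be a field of characteristic `≠ 2`, `A` a central simple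
`K`-algebra of even degree `2r` with orthogonal involution `θ`, and `ε : (E,σ) → (A,θ)` an
embedding of an étale algebra with involution of rank `2r` satisfying the dimension
condition (`E = F(√d)` with `σ(x) = −x` for `x = √d`).  Suppose `γ ∈ A^×` is a similitude of
`(A,θ)` (i.e. `γ·θ(γ) = λ ∈ K^×`) such that `Int(γ) ∘ ε ∘ σ = ε`.  Then `γ` is a proper
similitude (`Nrd(γ) = λ^r`) if `r` is even, and an improper similitude (`Nrd(γ) = −λ^r`) if
`r` is odd; uniformly: `Nrd(γ) = (−1)^r·λ^r`.

The reduced norm `Nrd` and the generalized Pfaffian `π_θ : Skew(A,θ) → Z(A,θ)` are given as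
data satisfying their characteristic properties (cf. [KMRT 98, §8]). -/
theorem similitude_proper_iff_even
    (K : Type u) [Field K] (h2 : (2 : K) ≠ 0)
    (A : Type u) [Ring A] [Algebra K A] [Algebra.IsCentral K A] [IsSimpleRing A]
    (r : ℕ) (hr : 0 < r) (hdeg : Module.finrank K A = (2 * r) ^ 2)
    -- the orthogonal involution θ
    (θ : A → A) (hθadd : ∀ x y, θ (x + y) = θ x + θ y)
    (hθmul : ∀ x y, θ (x * y) = θ y * θ x) (hθinv : ∀ x, θ (θ x) = x)
    (hθsmul : ∀ (c : K) (x : A), θ (c • x) = c • θ x)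
    -- the étale algebra with involution (E, σ), of rank 2r with fixed algebra of rank r,
    -- embedded in (A, θ) via ε
    (E : Type u) [CommRing E] [Algebra K E] [Module.Finite K E] [Algebra.Etale K E]
    (hE : Module.finrank K E = 2 * r)
    (σ : E →ₐ[K] E) (hσ : ∀ e, σ (σ e) = e)
    (ε : E →ₐ[K] A) (hεinj : Function.Injective ε)
    (hεθ : ∀ e : E, θ (ε e) = ε (σ e))
    -- E = F(√d): a σ-skew unit x
    (x : E) (hxσ : σ x = -x) (hxu : IsUnit x)
    -- the reduced norm of A, as data with its characteristic properties
    (Nrd : A → K)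
    (hNrd_unit : ∀ u : A, IsUnit u → Nrd u ≠ 0)
    -- the center Z(A,θ) of the Clifford algebra and the generalized Pfaffian π_θ
    (Z : Type u) [CommRing Z] [Algebra K Z]
    (hZinj : Function.Injective (algebraMap K Z))
    (hZunit : ∀ c : K, c ≠ 0 → IsUnit (algebraMap K Z c))
    (pf : A → Z)
    (hpf_transport : ∀ (g a : A), θ a = -a → pf (g * a * θ g) = Nrd g • pf a)
    (hpf_sq : ∀ a : A, θ a = -a → pf a ^ 2 = algebraMap K Z ((-1) ^ r * Nrd a))
    (hpf_smul : ∀ (c : K) (a : A), θ a = -a → pf (c • a) = c ^ r • pf a)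
    (hNrdx : Nrd (ε x) ≠ 0)
    -- γ is a similitude with multiplier λ, with Int(γ) ∘ ε ∘ σ = ε
    (γ γi : A) (hγi : γ * γi = 1) (hγi' : γi * γ = 1)
    (lam : K) (hlam : lam ≠ 0) (hsim : γ * θ γ = algebraMap K A lam)
    (hint : ∀ e : E, γ * ε (σ e) * γi = ε e) :
    Nrd γ = (-1) ^ r * lam ^ r :=
  similitude_proper_iff_even_general K A r θ E σ ε hεθ x hxσ Nrd Z hZinj hZunit pf hpf_transport
    hpf_sq hpf_smul hNrdx γ γi hγi' lam hsim hint
end
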